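/- arXiv:2412.21120 — 3 statements merged into one kernel-verified Lean document; each statement's English description precedes it below -/
import Mathlib

section
/- For any 1 ≤ s < s' ≤ r, the map σ_{e_s}σ_{e_{s'}} + σ_{e_{s'}}σ_{e_s} is identically zero on the pivot resolution T_{1,…,l}. -/
open MvPolynomial Finset

noncomputable section

/-- `fsign A B` is `0` if `A ∩ B ≠ ∅`, and otherwise `(−1)^{p(A,B)}` where `p(A,B)`
is the number of pairs `(a,b) ∈ A × B` with `a > b`. -/
def fsign {α : Type*} [LinearOrder α] [DecidableEq α] (A B : Finset α) : ℤ :=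
  if A ∩ B = ∅ then (-1 : ℤ) ^ (((A ×ˢ B).filter fun p => p.2 < p.1).card) else 0

/-- The total module underlying the Taylor complex: free over `Q = k[x_1,…,x_n]`
with basis `ε_τ` indexed by all subsets `τ ⊆ [q]`. -/
abbrev TotMod (k : Type*) [Field k] (n q : ℕ) : Type _ :=
  Finset (Fin q) →₀ MvPolynomial (Fin n) k

/-- `m_τ = lcm{m_i : i ∈ τ}`, where `m_i` is the monomial with exponent vector `D i`. -/
def lcmMono (k : Type*) [Field k] (n q : ℕ) (D : Fin q → (Fin n →₀ ℕ))
    (τ : Finset (Fin q)) : MvPolynomial (Fin n) k :=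
  monomial (τ.sup D) (1 : k)

/-- The monomial ideal `I = (m_1, …, m_q)`. -/
def monIdeal (k : Type*) [Field k] (n q : ℕ) (D : Fin q → (Fin n →₀ ℕ)) :
    Ideal (MvPolynomial (Fin n) k) :=
  Ideal.span (Set.range fun i => monomial (D i) (1 : k))

/-- The Taylor differential `∂(ε_τ) = Σ_{j∈τ} sign(j, τ∖{j}) (m_τ/m_{τ∖{j}}) ε_{τ∖{j}}`,
as a linear endomorphism of the total module. -/
def taylorD (k : Type*) [Field k] (n q : ℕ) (D : Fin q → (Fin n →₀ ℕ)) :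
    TotMod k n q →ₗ[MvPolynomial (Fin n) k] TotMod k n q :=
  Finsupp.linearCombination _ fun τ =>
    ∑ j ∈ τ, Finsupp.single (τ \ {j})
      ((fsign {j} (τ \ {j}) : MvPolynomial (Fin n) k) *
        monomial (τ.sup D - (τ \ {j}).sup D) (1 : k))

/-- The degree-`i` piece of the subcomplex of the Taylor complex spanned by the
`ε_τ` with `τ ∈ Ω`: the free submodule with basis `{ε_τ : τ ∈ Ω, |τ| = i}`. -/
def piece (k : Type*) [Field k] (n q : ℕ) (Ω : Set (Finset (Fin q))) (i : ℕ) :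
    Submodule (MvPolynomial (Fin n) k) (TotMod k n q) :=
  Finsupp.supported _ _ {τ | τ ∈ Ω ∧ τ.card = i}

/-- The subcomplex of the Taylor complex spanned by all `ε_τ` with `τ ∈ Ω`. -/
def subcx (k : Type*) [Field k] (n q : ℕ) (Ω : Set (Finset (Fin q))) :
    Submodule (MvPolynomial (Fin n) k) (TotMod k n q) :=
  Finsupp.supported _ _ Ω

/-- The index family of the pivot complex `T_S`: all `τ` with `τ ⊉ S`. -/
def pivotΩ {q : ℕ} (S : Finset (Fin q)) : Set (Finset (Fin q)) := {τ | ¬ S ⊆ τ}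

/-- The subcomplex of the Taylor complex spanned by `{ε_τ : τ ∈ Ω}` is a resolution
of `Q/I`: it is exact in homological degrees `≥ 1`, and its zeroth homology is
identified with `Q/I` via the augmentation `ε_∅ ↦ 1`. -/
def IsResolutionOf (k : Type*) [Field k] (n q : ℕ) (D : Fin q → (Fin n →₀ ℕ))
    (Ω : Set (Finset (Fin q))) : Prop :=
  (∀ i : ℕ, ∀ x ∈ piece k n q Ω (i + 1), taylorD k n q D x = 0 →
      ∃ y ∈ piece k n q Ω (i + 2), taylorD k n q D y = x) ∧
  (∀ x ∈ piece k n q Ω 0,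
      (x (∅ : Finset (Fin q)) ∈ monIdeal k n q D ↔
        ∃ y ∈ piece k n q Ω 1, taylorD k n q D y = x))

/-- The Scarf set of `I`: all `t` such that there are two distinct subsets
`τ ≠ τ'` of `[q]` with `|τ| = t` and `m_τ = m_{τ'}`.  The Scarf number of `I`
is `sInf` of this set; `scarf(I) = ∞` corresponds to this set being empty. -/
def scarfSet (k : Type*) [Field k] (n q : ℕ) (D : Fin q → (Fin n →₀ ℕ)) : Set ℕ :=
  {t | ∃ τ τ' : Finset (Fin q), τ ≠ τ' ∧ τ.card = t ∧
        lcmMono k n q D τ = lcmMono k n q D τ'}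


/-- The index set `[l] = {1,…,l}`, realized as the first `l` elements of `Fin q`. -/
def Lset (q l : ℕ) : Finset (Fin q) :=
  Finset.univ.filter fun i => (i : ℕ) < l

/-- The pivot index `l+1`, realized as the element of `Fin q` with value `l`. -/
def pivElt (q l : ℕ) (hq : l < q) : Fin q := ⟨l, hq⟩

/-- The unique element `t` of `[l] ∖ A` (when it exists). -/
def tOf (q l : ℕ) (hq : l < q) (A : Finset (Fin q)) : Fin q :=
  if h : (Lset q l \ A).Nonempty then (Lset q l \ A).min' h else pivElt q l hq

/-- The sum `Σ_{j ∈ J} sign(j,A) a_{sj} (m_j m_A / m_{A∪{j}}) ε_{A∪{j}}`,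
where `c j = a_{sj}`. -/
def sigTerm (k : Type*) [Field k] (n q : ℕ) (D : Fin q → (Fin n →₀ ℕ))
    (c : Fin q → MvPolynomial (Fin n) k) (A J : Finset (Fin q)) : TotMod k n q :=
  ∑ j ∈ J, Finsupp.single (insert j A)
    ((fsign {j} A : MvPolynomial (Fin n) k) * c j *
      monomial (D j + A.sup D - (insert j A).sup D) (1 : k))

/-- The correction term
`(−1)^{l+1} sign(t,A) a_{st} Σ_{i∈[l]} sign(i, A∪{t}∖{i})
  (m_t m_A / m_{A∪{t}∪{l+1}∖{i}}) ε_{A∪{t}∪{l+1}∖{i}}`. -/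
def sigCorr (k : Type*) [Field k] (n q l : ℕ) (hq : l < q)
    (D : Fin q → (Fin n →₀ ℕ)) (c : Fin q → MvPolynomial (Fin n) k)
    (A : Finset (Fin q)) (t : Fin q) : TotMod k n q :=
  ∑ i ∈ Lset q l, Finsupp.single ((insert (pivElt q l hq) (insert t A)) \ {i})
    ((-1 : MvPolynomial (Fin n) k) ^ (l + 1) *
      (fsign {t} A : MvPolynomial (Fin n) k) * c t *
      (fsign {i} (insert t A \ {i}) : MvPolynomial (Fin n) k) *
      monomial (D t + A.sup D - ((insert (pivElt q l hq) (insert t A)) \ {i}).sup D)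
        (1 : k))

/-- The homotopy `σ_{e_s}` (for coefficients `c j = a_{sj}`), defined on basis
elements `ε_A` by the three-case formula of Theorem 5.1 of the paper. -/
def sigmaMap (k : Type*) [Field k] (n q l : ℕ) (hq : l < q)
    (D : Fin q → (Fin n →₀ ℕ)) (c : Fin q → MvPolynomial (Fin n) k) :
    TotMod k n q →ₗ[MvPolynomial (Fin n) k] TotMod k n q :=
  Finsupp.linearCombination _ fun A =>
    if (A ∩ Lset q l).card ≠ l - 1 then
      sigTerm k n q D c A Aᶜ
    else if pivElt q l hq ∈ A then
      sigTerm k n q D c A (insert (tOf q l hq A) A)ᶜ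
    else
      sigTerm k n q D c A (insert (tOf q l hq A) A)ᶜ +
        sigCorr k n q l hq D c A (tOf q l hq A)

/-- The element `a_s = Σ_{j=1}^q a_{sj} m_j`, for coefficients `c j = a_{sj}`. -/
def aElt (k : Type*) [Field k] (n q : ℕ) (D : Fin q → (Fin n →₀ ℕ))
    (c : Fin q → MvPolynomial (Fin n) k) : MvPolynomial (Fin n) k :=
  ∑ j : Fin q, c j * monomial (D j) (1 : k)
end

namespace SA
section Lemmas


variable {qq : ℕ}

/-- number of elements of `B` less than `j` -/
def nu (j : Fin qq) (B : Finset (Fin qq)) : ℕ := #(B.filter (· < j))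

lemma fsign_singleton (j : Fin qq) (B : Finset (Fin qq)) :
    fsign {j} B = if j ∈ B then 0 else (-1 : ℤ) ^ (nu j B) := by
  unfold fsign nu
  rcases em (j ∈ B) with h | h
  · rw [if_neg, if_pos h]
    intro hc
    have : j ∈ ({j} ∩ B : Finset (Fin qq)) := by simp [h]
    simp [hc] at this
  · rw [if_pos, if_neg h]
    · congr 1
      rw [Finset.singleton_product, Finset.filter_map, Finset.card_map]
      rfl
    · ext x; simp; rintro rfl; exact h

lemma nu_insert (j a : Fin qq) (B : Finset (Fin qq)) (ha : a ∉ B) :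
    nu j (insert a B) = nu j B + if a < j then 1 else 0 := by
  unfold nu
  rw [Finset.filter_insert]
  split
  · rw [Finset.card_insert_of_notMem (by simp [ha])]
  · rw [add_zero]

lemma nu_sdiff_self (i : Fin qq) (B : Finset (Fin qq)) : nu i (B \ {i}) = nu i B := by
  unfold nu
  congr 1
  ext x; simp only [mem_filter, mem_sdiff, mem_singleton]
  constructor
  · tauto
  · rintro ⟨hx, hlt⟩; exact ⟨⟨hx, fun h => by simp [h] at hlt⟩, hlt⟩

lemma nu_sdiff (j i : Fin qq) (B : Finset (Fin qq)) (hi : i ∈ B) :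
    nu j (B \ {i}) + (if i < j then 1 else 0) = nu j B := by
  have : B = insert i (B \ {i}) := by
    rw [Finset.sdiff_singleton_eq_erase, Finset.insert_erase hi]
  conv_rhs => rw [this]
  rw [nu_insert j i _ (by simp)]

variable {qq : ℕ}

lemma neg_one_pow_odd_sum {a b : ℕ} (h : (a + b) % 2 = 1) :
    (-1 : ℤ) ^ a + (-1 : ℤ) ^ b = 0 := by
  rcases Nat.even_or_odd a with ha | ha
  · have ha' := Nat.even_iff.mp ha
    rw [ha.neg_one_pow, (Nat.odd_iff.mpr (by omega)).neg_one_pow]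
    ring
  · have ha' := Nat.odd_iff.mp ha
    rw [ha.neg_one_pow, (Nat.even_iff.mpr (by omega)).neg_one_pow]
    ring

/-- S2: basic swap identity. -/
lemma sign_swap {j j' : Fin qq} (A : Finset (Fin qq)) (hj : j ∉ A) (hj' : j' ∉ A) (hne : j ≠ j') :
    fsign {j} A * fsign {j'} (insert j A) + fsign {j'} A * fsign {j} (insert j' A) = 0 := by
  rw [fsign_singleton, fsign_singleton, fsign_singleton, fsign_singleton,
    if_neg hj, if_neg hj', if_neg (by simp [hne.symm, hj']), if_neg (by simp [hne, hj]),
    nu_insert _ _ _ hj, nu_insert _ _ _ hj', ← pow_add, ← pow_add]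
  apply neg_one_pow_odd_sum
  rcases hne.lt_or_gt with h | h
  · rw [if_pos h, if_neg (not_lt_of_gt h)]; omega
  · rw [if_neg (not_lt_of_gt h), if_pos h]; omega

/-- S5 sign identity. -/
lemma sign_five {j t piv i : Fin qq} (A : Finset (Fin qq)) (hj : j ∉ A) (ht : t ∉ A) (hjt : j ≠ t)
    (hpivA : piv ∉ A) (hpivt : piv ≠ t) (hpivj : piv < j) (hi : i ∈ insert t A) :
    fsign {j} A * fsign {t} (insert j A) * fsign {i} ((insert t (insert j A)) \ {i})
      + fsign {t} A * fsign {i} ((insert t A) \ {i}) *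
          fsign {j} ((insert piv (insert t A)) \ {i}) = 0 := by
  have hij : i ≠ j := by rintro rfl; simp [hj, hjt] at hi
  have hipiv : i ≠ piv := by rintro rfl; simp [hpivA, hpivt] at hi
  have hjpiv : j ≠ piv := hpivj.ne'
  have h1 : i ∈ insert t (insert j A) := by
    simp only [mem_insert] at hi ⊢; tauto
  have h2 : i ∈ insert piv (insert t A) := by simp [hi]
  have e1 : fsign {j} A = (-1:ℤ) ^ nu j A := by rw [fsign_singleton, if_neg hj]
  have e2 : fsign {t} (insert j A) = (-1:ℤ) ^ nu t (insert j A) := by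
    rw [fsign_singleton, if_neg (by simp [hjt.symm, ht])]
  have e3 : fsign {i} ((insert t (insert j A)) \ {i}) = (-1:ℤ) ^ nu i ((insert t (insert j A)) \ {i}) := by
    rw [fsign_singleton, if_neg (by simp)]
  have e4 : fsign {t} A = (-1:ℤ) ^ nu t A := by rw [fsign_singleton, if_neg ht]
  have e5 : fsign {i} ((insert t A) \ {i}) = (-1:ℤ) ^ nu i ((insert t A) \ {i}) := by
    rw [fsign_singleton, if_neg (by simp)]
  have e6 : fsign {j} ((insert piv (insert t A)) \ {i}) = (-1:ℤ) ^ nu j ((insert piv (insert t A)) \ {i}) := by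
    rw [fsign_singleton, if_neg (by simp [mem_sdiff, mem_insert, hjpiv, hjt, hj])]
  rw [e1, e2, e3, e4, e5, e6, ← pow_add, ← pow_add, ← pow_add, ← pow_add]
  apply neg_one_pow_odd_sum
  -- expand all nus
  have n2 : nu t (insert j A) = nu t A + if j < t then 1 else 0 := nu_insert _ _ _ hj
  have n3 : nu i ((insert t (insert j A)) \ {i}) = nu i (insert t (insert j A)) := by
    rw [nu_sdiff_self]
  have n3' : nu i (insert t (insert j A)) = nu i (insert j A) + if t < i then 1 else 0 :=
    nu_insert _ _ _ (by simp [hjt.symm, ht])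
  have n3'' : nu i (insert j A) = nu i A + if j < i then 1 else 0 := nu_insert _ _ _ hj
  have n5 : nu i ((insert t A) \ {i}) = nu i (insert t A) := nu_sdiff_self _ _
  have n5' : nu i (insert t A) = nu i A + if t < i then 1 else 0 := nu_insert _ _ _ ht
  have n6 : nu j ((insert piv (insert t A)) \ {i}) + (if i < j then 1 else 0)
      = nu j (insert piv (insert t A)) := nu_sdiff _ _ _ h2
  have n6' : nu j (insert piv (insert t A)) = nu j (insert t A) + if piv < j then 1 else 0 :=
    nu_insert _ _ _ (by simp [hpivt, hpivA])
  have n6'' : nu j (insert t A) = nu j A + if t < j then 1 else 0 := nu_insert _ _ _ ht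
  rw [if_pos hpivj] at n6'
  have hjt2 : (if j < t then 1 else 0) + (if t < j then 1 else 0) = 1 := by
    rcases hjt.lt_or_gt with h | h
    · rw [if_pos h, if_neg (not_lt_of_gt h)]
    · rw [if_neg (not_lt_of_gt h), if_pos h]
  have hij2 : (if j < i then 1 else 0) + (if i < j then 1 else 0) = 1 := by
    rcases hij.symm.lt_or_gt with h | h
    · rw [if_pos h, if_neg (not_lt_of_gt h)]
    · rw [if_neg (not_lt_of_gt h), if_pos h]
  omega


variable {n q : ℕ}

/-- main-term exponent -/
noncomputable def Mexp (D : Fin q → (Fin n →₀ ℕ)) (j : Fin q) (A : Finset (Fin q)) : Fin n →₀ ℕ :=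
  D j + A.sup D - (insert j A).sup D

/-- correction-term exponent -/
noncomputable def Cexp (D : Fin q → (Fin n →₀ ℕ)) (piv t : Fin q) (A : Finset (Fin q)) (i : Fin q) :
    Fin n →₀ ℕ :=
  D t + A.sup D - ((insert piv (insert t A)) \ {i}).sup D

variable (D : Fin q → (Fin n →₀ ℕ))

lemma sup_insert_le (j : Fin q) (A : Finset (Fin q)) :
    (insert j A).sup D ≤ D j + A.sup D := by
  apply Finset.sup_le
  intro i hi
  rcases Finset.mem_insert.mp hi with rfl | hi
  · exact le_self_add
  · exact (Finset.le_sup hi).trans (self_le_add_left _ _)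

lemma exp_combine (u v s w : Fin n →₀ ℕ) (h1 : s ≤ u) (h2 : w ≤ v + s) :
    (u - s) + (v + s - w) = u + v - w := by
  ext x
  have h1x := h1 x
  have h2x := h2 x
  simp only [Finsupp.coe_add, Finsupp.coe_tsub, Pi.add_apply, Pi.sub_apply] at *
  omega

lemma insert_sdiff_set (j i piv t : Fin q) (A : Finset (Fin q)) (hij : j ≠ i) :
    insert j ((insert piv (insert t A)) \ {i}) = (insert piv (insert t (insert j A))) \ {i} := by
  ext x
  simp only [mem_insert, mem_sdiff, mem_singleton]
  constructor
  · rintro (rfl | ⟨h, hne⟩)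
    · exact ⟨by tauto, hij⟩
    · tauto
  · tauto

lemma Mexp_add_Mexp (j j' : Fin q) (A : Finset (Fin q)) :
    Mexp D j A + Mexp D j' (insert j A)
      = D j + D j' + A.sup D - (insert j' (insert j A)).sup D := by
  unfold Mexp
  rw [exp_combine (D j + A.sup D) (D j') ((insert j A).sup D)
    ((insert j' (insert j A)).sup D) (sup_insert_le D j A) (sup_insert_le D j' (insert j A))]
  rw [add_right_comm]

lemma Mexp_add_Cexp (piv t j : Fin q) (A : Finset (Fin q)) (i : Fin q)
    (hpiv : D piv ≤ (insert t (insert j A)).sup D) :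
    Mexp D j A + Cexp D piv t (insert j A) i
      = D j + D t + A.sup D - ((insert piv (insert t (insert j A))) \ {i}).sup D := by
  unfold Mexp Cexp
  rw [exp_combine (D j + A.sup D) (D t) ((insert j A).sup D) _
    (sup_insert_le D j A) ?h2]
  · rw [add_right_comm]
  case h2 =>
    refine (Finset.sup_mono sdiff_subset).trans ?_
    rw [Finset.sup_insert]
    exact sup_le (hpiv.trans (sup_insert_le D t (insert j A))) (sup_insert_le D t (insert j A))

lemma Cexp_add_Mexp (piv t j : Fin q) (A : Finset (Fin q)) (i : Fin q)
    (hpiv : D piv ≤ (insert t A).sup D) (hij : j ≠ i) :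
    Cexp D piv t A i + Mexp D j ((insert piv (insert t A)) \ {i})
      = D j + D t + A.sup D - ((insert piv (insert t (insert j A))) \ {i}).sup D := by
  unfold Mexp Cexp
  rw [exp_combine (D t + A.sup D) (D j) (((insert piv (insert t A)) \ {i}).sup D) _
    ?h1 (sup_insert_le D j _)]
  · rw [insert_sdiff_set j i piv t A hij, add_comm (D t) (A.sup D), add_comm _ (D j),
      ← add_assoc, add_right_comm (D j) (D t) (A.sup D)]
  case h1 =>
    refine (Finset.sup_mono sdiff_subset).trans ?_
    rw [Finset.sup_insert]
    exact sup_le (hpiv.trans (sup_insert_le D t A)) (sup_insert_le D t A)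


variable {k : Type*} [Field k]

noncomputable def coefM (D : Fin q → (Fin n →₀ ℕ)) (c : Fin q → MvPolynomial (Fin n) k)
    (j : Fin q) (A : Finset (Fin q)) : MvPolynomial (Fin n) k :=
  (fsign {j} A : MvPolynomial (Fin n) k) * c j * monomial (Mexp D j A) 1

noncomputable def coefCorr (D : Fin q → (Fin n →₀ ℕ)) (l : ℕ) (piv : Fin q)
    (c : Fin q → MvPolynomial (Fin n) k) (A : Finset (Fin q)) (t i : Fin q) :
    MvPolynomial (Fin n) k :=
  (-1 : MvPolynomial (Fin n) k) ^ (l + 1) * (fsign {t} A : MvPolynomial (Fin n) k) * c t *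
    (fsign {i} (insert t A \ {i}) : MvPolynomial (Fin n) k) * monomial (Cexp D piv t A i) 1

lemma gen4 {R : Type*} [CommRing R] {x1 x2 y1 y2 a b a' b' m1 m2 m1' m2' M : R}
    (hm : m1 * m2 = M) (hm' : m1' * m2' = M) (hs : x1 * x2 + y1 * y2 = 0) :
    (x1 * a * m1) * (x2 * b * m2) + (x1 * a' * m1) * (x2 * b' * m2)
      + (y1 * b' * m1') * (y2 * a' * m2') + (y1 * b * m1') * (y2 * a * m2') = 0 := by
  linear_combination (a * b + a' * b') * (x1 * x2 * hm + y1 * y2 * hm' + M * hs)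

lemma gen5 {R : Type*} [CommRing R] {e x1 z1 w1 z2 w2 y a b a' b' m1 m2 m1' m2' M : R}
    (hm : m1 * m2 = M) (hm' : m1' * m2' = M) (hs : x1 * z1 * w1 + z2 * w2 * y = 0) :
    (x1 * a * m1) * (e * z1 * b * w1 * m2) + (x1 * a' * m1) * (e * z1 * b' * w1 * m2)
      + (e * z2 * b' * w2 * m1') * (y * a' * m2')
      + (e * z2 * b * w2 * m1') * (y * a * m2') = 0 := by
  linear_combination e * (a * b + a' * b') * (x1 * z1 * w1 * hm + z2 * w2 * y * hm' + M * hs)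

lemma gen4c {R : Type*} [CommRing R] {e x1 z1 w1 x2 z2 w2 a b a' b' m1 m2 m1' m2' M : R}
    (hm : m1 * m2 = M) (hm' : m1' * m2' = M) (hs : x1 * z1 * w1 + x2 * z2 * w2 = 0) :
    (x1 * a * m1) * (e * z1 * b * w1 * m2) + (x1 * a' * m1) * (e * z1 * b' * w1 * m2)
      + (x2 * b' * m1') * (e * z2 * a' * w2 * m2')
      + (x2 * b * m1') * (e * z2 * a * w2 * m2') = 0 := by
  linear_combination e * (a * b + a' * b') * (x1 * z1 * w1 * hm + x2 * z2 * w2 * hm' + M * hs)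

variable (D : Fin q → (Fin n →₀ ℕ)) (c c' : Fin q → MvPolynomial (Fin n) k)

lemma mono_mul (a b : Fin n →₀ ℕ) :
    (monomial a (1 : k)) * monomial b 1 = monomial (a + b) 1 := by
  rw [monomial_mul, one_mul]

/-- S1R: the main-main four-term cancellation. -/
lemma S1R {j j' : Fin q} (A : Finset (Fin q)) (hj : j ∉ A) (hj' : j' ∉ A) (hne : j ≠ j') :
    coefM D c' j A * coefM D c j' (insert j A) + coefM D c j A * coefM D c' j' (insert j A)
      + coefM D c' j' A * coefM D c j (insert j' A)
      + coefM D c j' A * coefM D c' j (insert j' A) = 0 := by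
  have h1 := mono_mul (k := k) (Mexp D j A) (Mexp D j' (insert j A))
  rw [Mexp_add_Mexp] at h1
  have h2 := mono_mul (k := k) (Mexp D j' A) (Mexp D j (insert j' A))
  rw [Mexp_add_Mexp, Finset.insert_comm, add_comm (D j') (D j)] at h2
  have hsZ := sign_swap A hj hj' hne
  have hs : (fsign {j} A : MvPolynomial (Fin n) k) * (fsign {j'} (insert j A) : MvPolynomial (Fin n) k)
      + (fsign {j'} A : MvPolynomial (Fin n) k) * (fsign {j} (insert j' A) : MvPolynomial (Fin n) k) = 0 := by
    exact_mod_cast congrArg (fun z : ℤ => (z : MvPolynomial (Fin n) k)) hsZ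
  exact gen4 h1 h2 hs

/-- S5R: the case-(iii) main/correction cross cancellation. -/
lemma S5R {j t piv i : Fin q} (A : Finset (Fin q)) (l : ℕ) (hj : j ∉ A) (ht : t ∉ A)
    (hjt : j ≠ t) (hpivA : piv ∉ A) (hpivt : piv ≠ t) (hpivj : piv < j)
    (hi : i ∈ insert t A) (hij : j ≠ i) (hgapm : D piv ≤ (insert t A).sup D) :
    coefM D c' j A * coefCorr D l piv c (insert j A) t i
      + coefM D c j A * coefCorr D l piv c' (insert j A) t i
      + coefCorr D l piv c' A t i * coefM D c j ((insert piv (insert t A)) \ {i})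
      + coefCorr D l piv c A t i * coefM D c' j ((insert piv (insert t A)) \ {i}) = 0 := by
  have h1 := mono_mul (k := k) (Mexp D j A) (Cexp D piv t (insert j A) i)
  rw [Mexp_add_Cexp D piv t j A i
    (hgapm.trans (Finset.sup_mono (insert_subset_insert _ (Finset.subset_insert _ _))))] at h1
  have h2 := mono_mul (k := k) (Cexp D piv t A i) (Mexp D j ((insert piv (insert t A)) \ {i}))
  rw [Cexp_add_Mexp D piv t j A i hgapm hij] at h2
  have hsZ := sign_five A hj ht hjt hpivA hpivt hpivj hi
  have hs : (fsign {j} A : MvPolynomial (Fin n) k) * (fsign {t} (insert j A) : MvPolynomial (Fin n) k)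
        * (fsign {i} ((insert t (insert j A)) \ {i}) : MvPolynomial (Fin n) k)
      + (fsign {t} A : MvPolynomial (Fin n) k)
        * (fsign {i} ((insert t A) \ {i}) : MvPolynomial (Fin n) k)
        * (fsign {j} ((insert piv (insert t A)) \ {i}) : MvPolynomial (Fin n) k) = 0 := by
    exact_mod_cast congrArg (fun z : ℤ => (z : MvPolynomial (Fin n) k)) hsZ
  exact gen5 h1 h2 hs

/-- S4R: the case-(iv) correction-correction cancellation. -/
lemma S4R {t1 t2 piv : Fin q} (i : Fin q) (A : Finset (Fin q)) (l : ℕ) (ht1 : t1 ∉ A)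
    (ht2 : t2 ∉ A) (hne : t1 ≠ t2)
    (hgapm : D piv ≤ (insert t2 (insert t1 A)).sup D) :
    coefM D c' t1 A * coefCorr D l piv c (insert t1 A) t2 i
      + coefM D c t1 A * coefCorr D l piv c' (insert t1 A) t2 i
      + coefM D c' t2 A * coefCorr D l piv c (insert t2 A) t1 i
      + coefM D c t2 A * coefCorr D l piv c' (insert t2 A) t1 i = 0 := by
  have h1 := mono_mul (k := k) (Mexp D t1 A) (Cexp D piv t2 (insert t1 A) i)
  rw [Mexp_add_Cexp D piv t2 t1 A i hgapm] at h1
  have h2 := mono_mul (k := k) (Mexp D t2 A) (Cexp D piv t1 (insert t2 A) i)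
  rw [Mexp_add_Cexp D piv t1 t2 A i (by rwa [Finset.insert_comm]),
    add_comm (D t2) (D t1), Finset.insert_comm t1 t2] at h2
  have hsZ := sign_swap A ht1 ht2 hne
  have hs : (fsign {t1} A : MvPolynomial (Fin n) k) * (fsign {t2} (insert t1 A) : MvPolynomial (Fin n) k)
        * (fsign {i} (insert t2 (insert t1 A) \ {i}) : MvPolynomial (Fin n) k)
      + (fsign {t2} A : MvPolynomial (Fin n) k) * (fsign {t1} (insert t2 A) : MvPolynomial (Fin n) k)
        * (fsign {i} (insert t1 (insert t2 A) \ {i}) : MvPolynomial (Fin n) k) = 0 := by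
    rw [Finset.insert_comm t1 t2]
    have : ((fsign {t1} A * fsign {t2} (insert t1 A) + fsign {t2} A * fsign {t1} (insert t2 A) : ℤ) :
        MvPolynomial (Fin n) k) = 0 := by exact_mod_cast congrArg (fun z : ℤ => (z : MvPolynomial (Fin n) k)) hsZ
    push_cast at this
    linear_combination (fsign {i} (insert t2 (insert t1 A) \ {i}) : MvPolynomial (Fin n) k) * this
  unfold coefCorr coefM
  exact gen4c h1 h2 hs


end Lemmas

section Main
variable {k : Type*} [Field k] {n q l : ℕ} (hq : l < q) (D : Fin q → (Fin n →₀ ℕ))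
  (c c' : Fin q → MvPolynomial (Fin n) k)

lemma mem_Lset {i : Fin q} : i ∈ Lset q l ↔ (i : ℕ) < l := by simp [Lset]

include hq in
lemma card_Lset : (Lset q l).card = l := by
  have h : Lset q l = (Finset.univ : Finset (Fin l)).map
      ⟨Fin.castLE hq.le, Fin.castLE_injective hq.le⟩ := by
    ext x
    simp only [Lset, Finset.mem_filter, Finset.mem_univ, true_and, Finset.mem_map,
      Function.Embedding.coeFn_mk]
    constructor
    · intro hx; exact ⟨⟨(x : ℕ), hx⟩, Fin.ext rfl⟩
    · rintro ⟨y, rfl⟩; exact y.isLt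
  rw [h, Finset.card_map, Finset.card_univ, Fintype.card_fin]

lemma piv_not_mem : pivElt q l hq ∉ Lset q l := by simp [Lset, pivElt]

lemma Lset_subset {A : Finset (Fin q)} {t : Fin q} (h : Lset q l \ A = {t}) :
    Lset q l ⊆ insert t A := by
  intro x hx
  by_cases hxA : x ∈ A
  · exact Finset.mem_insert_of_mem hxA
  · have hx2 : x ∈ Lset q l \ A := Finset.mem_sdiff.mpr ⟨hx, hxA⟩
    rw [h, Finset.mem_singleton] at hx2
    simp [hx2]

lemma t_mem_props {A : Finset (Fin q)} {t : Fin q} (h : Lset q l \ A = {t}) :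
    t ∈ Lset q l ∧ t ∉ A :=
  Finset.mem_sdiff.mp (h ▸ Finset.mem_singleton_self t)

lemma tOf_eq {A : Finset (Fin q)} {t : Fin q} (h : Lset q l \ A = {t}) :
    tOf q l hq A = t := by
  unfold tOf
  split
  · next hne =>
    exact le_antisymm (Finset.min'_le _ _ (h ▸ Finset.mem_singleton_self t))
      (Finset.le_min' _ _ _ (fun y hy => by rw [h, Finset.mem_singleton] at hy; exact hy.ge))
  · next hne => exact absurd ⟨t, h ▸ Finset.mem_singleton_self t⟩ hne

include hq in
lemma card_inter_of_sdiff_singleton {A : Finset (Fin q)} {t : Fin q}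
    (h : Lset q l \ A = {t}) : (A ∩ Lset q l).card = l - 1 := by
  have h1 : (Lset q l \ A).card = 1 := by rw [h]; simp
  have h2 := Finset.card_sdiff_add_card_inter (Lset q l) A
  rw [Finset.inter_comm, card_Lset hq] at h2
  omega

include hq in
lemma sdiff_singleton_of_card {A : Finset (Fin q)} (hl : 2 ≤ l)
    (hcard : (A ∩ Lset q l).card = l - 1) : ∃ t, Lset q l \ A = {t} := by
  have h2 := Finset.card_sdiff_add_card_inter (Lset q l) A
  rw [Finset.inter_comm, card_Lset hq, hcard] at h2
  exact Finset.card_eq_one.mp (by omega)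

include hq in
lemma sdiff_pair_of_card {A : Finset (Fin q)} (hl : 2 ≤ l)
    (hcard : (A ∩ Lset q l).card = l - 2) :
    ∃ t1 t2, t1 ≠ t2 ∧ Lset q l \ A = {t1, t2} := by
  have h2 := Finset.card_sdiff_add_card_inter (Lset q l) A
  rw [Finset.inter_comm, card_Lset hq, hcard] at h2
  obtain ⟨t1, t2, hne, hp⟩ := Finset.card_eq_two.mp (show (Lset q l \ A).card = 2 by omega)
  exact ⟨t1, t2, hne, hp⟩

lemma card_inter_insert {A : Finset (Fin q)} {j : Fin q} (hj : j ∉ A) :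
    ((insert j A) ∩ Lset q l).card
      = (A ∩ Lset q l).card + (if j ∈ Lset q l then 1 else 0) := by
  by_cases hjL : j ∈ Lset q l
  · rw [if_pos hjL, Finset.insert_inter_of_mem hjL,
      Finset.card_insert_of_notMem (by simp [hj])]
  · rw [if_neg hjL, Finset.insert_inter_of_notMem hjL, add_zero]

lemma not_mem_Lset_of {A : Finset (Fin q)} {t j : Fin q} (h : Lset q l \ A = {t})
    (hjA : j ∉ A) (hjt : j ≠ t) : j ∉ Lset q l := fun hjL => hjt (by
  have hx : j ∈ Lset q l \ A := Finset.mem_sdiff.mpr ⟨hjL, hjA⟩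
  rw [h, Finset.mem_singleton] at hx; exact hx)

lemma sdiff_insert_of {A : Finset (Fin q)} {t j : Fin q} (h : Lset q l \ A = {t})
    (hjL : j ∉ Lset q l) : Lset q l \ (insert j A) = {t} := by
  rw [← h]
  ext x
  simp only [Finset.mem_sdiff, Finset.mem_insert]
  constructor
  · rintro ⟨hx, h2⟩; exact ⟨hx, fun hxA => h2 (Or.inr hxA)⟩
  · rintro ⟨hx, h2⟩
    refine ⟨hx, ?_⟩
    rintro (rfl | hxA)
    · exact hjL hx
    · exact h2 hxA

lemma sigTerm_sum (A J : Finset (Fin q)) :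
    sigTerm k n q D c A J = ∑ j ∈ J, Finsupp.single (insert j A) (coefM D c j A) := rfl

lemma sigCorr_sum (A : Finset (Fin q)) (t : Fin q) :
    sigCorr k n q l hq D c A t
      = ∑ i ∈ Lset q l, Finsupp.single ((insert (pivElt q l hq) (insert t A)) \ {i})
          (coefCorr D l (pivElt q l hq) c A t i) := rfl

lemma sigma_single_i (A : Finset (Fin q)) (p : MvPolynomial (Fin n) k)
    (h : (A ∩ Lset q l).card ≠ l - 1) :
    sigmaMap k n q l hq D c (Finsupp.single A p) = p • sigTerm k n q D c A Aᶜ := by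
  unfold sigmaMap
  rw [Finsupp.linearCombination_single, if_pos h]

lemma sigma_single_ii (A : Finset (Fin q)) (p : MvPolynomial (Fin n) k)
    (h : (A ∩ Lset q l).card = l - 1) (hpiv : pivElt q l hq ∈ A) :
    sigmaMap k n q l hq D c (Finsupp.single A p)
      = p • sigTerm k n q D c A (insert (tOf q l hq A) A)ᶜ := by
  unfold sigmaMap
  rw [Finsupp.linearCombination_single, if_neg (by simpa using h), if_pos hpiv]

lemma sigma_single_iii (A : Finset (Fin q)) (p : MvPolynomial (Fin n) k)
    (h : (A ∩ Lset q l).card = l - 1) (hpiv : pivElt q l hq ∉ A) :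
    sigmaMap k n q l hq D c (Finsupp.single A p)
      = p • (sigTerm k n q D c A (insert (tOf q l hq A) A)ᶜ
          + sigCorr k n q l hq D c A (tOf q l hq A)) := by
  unfold sigmaMap
  rw [Finsupp.linearCombination_single, if_neg (by simpa using h), if_neg hpiv]

lemma hstep_ne {A : Finset (Fin q)} (hl : 2 ≤ l) (h1 : (A ∩ Lset q l).card ≠ l - 1)
    (h2 : (A ∩ Lset q l).card ≠ l - 2) {j : Fin q} (hj : j ∉ A) :
    ((insert j A) ∩ Lset q l).card ≠ l - 1 := by
  rw [card_inter_insert hj]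
  by_cases hjL : j ∈ Lset q l
  · rw [if_pos hjL]; omega
  · rw [if_neg hjL]; omega

lemma core_case1 {A : Finset (Fin q)} (hl : 2 ≤ l) (h1 : (A ∩ Lset q l).card ≠ l - 1)
    (h2 : (A ∩ Lset q l).card ≠ l - 2) :
    sigmaMap k n q l hq D c (sigmaMap k n q l hq D c' (Finsupp.single A 1))
      + sigmaMap k n q l hq D c' (sigmaMap k n q l hq D c (Finsupp.single A 1)) = 0 := by
  rw [sigma_single_i hq D c' A 1 h1, sigma_single_i hq D c A 1 h1, one_smul, one_smul,
    sigTerm_sum, sigTerm_sum, map_sum, map_sum]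
  have expand : ∀ u v : Fin q → MvPolynomial (Fin n) k,
      (∑ j ∈ Aᶜ, sigmaMap k n q l hq D v (Finsupp.single (insert j A) (coefM D u j A)))
        = ∑ j ∈ Aᶜ, ∑ j' ∈ (insert j A)ᶜ,
            Finsupp.single (insert j' (insert j A))
              (coefM D u j A * coefM D v j' (insert j A)) := by
    intro u v
    refine Finset.sum_congr rfl fun j hj => ?_
    rw [sigma_single_i hq D v (insert j A) _ (hstep_ne hl h1 h2 (by simpa using hj)),
      sigTerm_sum, Finset.smul_sum]
    refine Finset.sum_congr rfl fun j' _ => ?_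
    rw [Finsupp.smul_single, smul_eq_mul]
  rw [expand c' c, expand c c', ← Finset.sum_add_distrib]
  simp_rw [← Finset.sum_add_distrib, ← Finsupp.single_add]
  rw [Finset.sum_sigma']
  refine Finset.sum_involution (fun p _ => ⟨p.2, p.1⟩) ?_ ?_ ?_ ?_
  · rintro ⟨j, j'⟩ hp
    rw [Finset.mem_sigma, Finset.mem_compl, Finset.mem_compl, Finset.mem_insert] at hp
    obtain ⟨hj, hj'⟩ := hp
    push_neg at hj'
    obtain ⟨hne, hj'A⟩ := hj'
    rw [Finset.insert_comm j j', ← Finsupp.single_add, ← add_assoc,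
      S1R D c c' A hj hj'A (Ne.symm hne), Finsupp.single_zero]
  · rintro ⟨j, j'⟩ hp _
    rw [Finset.mem_sigma, Finset.mem_compl, Finset.mem_compl, Finset.mem_insert] at hp
    push_neg at hp
    intro hcontra
    exact hp.2.1 (congrArg Sigma.fst hcontra)
  · rintro ⟨j, j'⟩ hp
    rw [Finset.mem_sigma, Finset.mem_compl, Finset.mem_compl, Finset.mem_insert] at hp
    push_neg at hp
    rw [Finset.mem_sigma, Finset.mem_compl, Finset.mem_compl, Finset.mem_insert]
    push_neg
    exact ⟨hp.2.2, fun h => hp.2.1 h.symm, hp.1⟩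
  · rintro ⟨j, j'⟩ _; rfl

lemma core_case2 {A : Finset (Fin q)} (hl : 2 ≤ l) (h1 : (A ∩ Lset q l).card = l - 1)
    (hpiv : pivElt q l hq ∈ A) :
    sigmaMap k n q l hq D c (sigmaMap k n q l hq D c' (Finsupp.single A 1))
      + sigmaMap k n q l hq D c' (sigmaMap k n q l hq D c (Finsupp.single A 1)) = 0 := by
  obtain ⟨t, ht⟩ := sdiff_singleton_of_card hq hl h1
  have htOf : tOf q l hq A = t := tOf_eq hq ht
  rw [sigma_single_ii hq D c' A 1 h1 hpiv, sigma_single_ii hq D c A 1 h1 hpiv,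
    one_smul, one_smul, htOf, sigTerm_sum, sigTerm_sum, map_sum, map_sum]
  have expand : ∀ u v : Fin q → MvPolynomial (Fin n) k,
      (∑ j ∈ (insert t A)ᶜ, sigmaMap k n q l hq D v (Finsupp.single (insert j A) (coefM D u j A)))
        = ∑ j ∈ (insert t A)ᶜ, ∑ j' ∈ (insert t (insert j A))ᶜ,
            Finsupp.single (insert j' (insert j A))
              (coefM D u j A * coefM D v j' (insert j A)) := by
    intro u v
    refine Finset.sum_congr rfl fun j hj => ?_
    rw [Finset.mem_compl, Finset.mem_insert] at hj
    push_neg at hj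
    have hjL : j ∉ Lset q l := not_mem_Lset_of ht hj.2 hj.1
    have hsd : Lset q l \ (insert j A) = {t} := sdiff_insert_of ht hjL
    rw [sigma_single_ii hq D v (insert j A) _ (card_inter_of_sdiff_singleton hq hsd)
        (Finset.mem_insert_of_mem hpiv), tOf_eq hq hsd,
      sigTerm_sum, Finset.smul_sum]
    refine Finset.sum_congr rfl fun j' _ => ?_
    rw [Finsupp.smul_single, smul_eq_mul]
  rw [expand c' c, expand c c', ← Finset.sum_add_distrib]
  simp_rw [← Finset.sum_add_distrib, ← Finsupp.single_add]
  rw [Finset.sum_sigma']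
  refine Finset.sum_involution (fun p _ => ⟨p.2, p.1⟩) ?_ ?_ ?_ ?_
  · rintro ⟨j, j'⟩ hp
    simp only [Finset.mem_sigma, Finset.mem_compl, Finset.mem_insert, not_or] at hp
    obtain ⟨⟨hjt, hjA⟩, hj't, hj'j, hj'A⟩ := hp
    rw [Finset.insert_comm j j', ← Finsupp.single_add, ← add_assoc,
      S1R D c c' A hjA hj'A (Ne.symm hj'j), Finsupp.single_zero]
  · rintro ⟨j, j'⟩ hp _
    simp only [Finset.mem_sigma, Finset.mem_compl, Finset.mem_insert, not_or] at hp
    intro hcontra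
    exact hp.2.2.1 (congrArg Sigma.fst hcontra)
  · rintro ⟨j, j'⟩ hp
    simp only [Finset.mem_sigma, Finset.mem_compl, Finset.mem_insert, not_or] at hp ⊢
    exact ⟨⟨hp.2.1, hp.2.2.2⟩, hp.1.1, fun h => hp.2.2.1 h.symm, hp.1.2⟩
  · rintro ⟨j, j'⟩ _; rfl

lemma six_split {M : Type*} [AddCommGroup M] {a1 a2 a3 b1 b2 b3 : M}
    (h1 : a1 + b1 = 0) (h2 : (a2 + b2) + (a3 + b3) = 0) :
    ((a1 + a2) + a3) + ((b1 + b2) + b3) = 0 := by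
  calc ((a1 + a2) + a3) + ((b1 + b2) + b3)
      = (a1 + b1) + ((a2 + b2) + (a3 + b3)) := by abel
    _ = 0 := by rw [h1, h2, add_zero]

lemma piv_lt {j : Fin q} (hjL : j ∉ Lset q l) (hjp : j ≠ pivElt q l hq) :
    pivElt q l hq < j := by
  have h1 : ¬ (j : ℕ) < l := fun h => hjL (mem_Lset.mpr h)
  have h2 : (j : ℕ) ≠ l := fun h => hjp (Fin.ext (by simp [pivElt, h]))
  rw [Fin.lt_def]
  simp only [pivElt]
  omega

lemma Bi_sdiff {A : Finset (Fin q)} {t i : Fin q} (ht : Lset q l \ A = {t})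
    (hiL : i ∈ Lset q l) :
    Lset q l \ ((insert (pivElt q l hq) (insert t A)) \ {i}) = {i} := by
  ext x
  simp only [Finset.mem_sdiff, Finset.mem_singleton, Finset.mem_insert]
  constructor
  · rintro ⟨hxL, hcond⟩
    by_contra hxi
    have hx2 : x = t ∨ x ∈ A := Finset.mem_insert.mp (Lset_subset ht hxL)
    exact hcond ⟨Or.inr hx2, hxi⟩
  · rintro rfl
    exact ⟨hiL, fun hc => hc.2 rfl⟩

lemma MM_zero (t : Fin q) (A : Finset (Fin q)) :
    (∑ j ∈ (insert t A)ᶜ, ∑ j' ∈ (insert t (insert j A))ᶜ,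
        Finsupp.single (insert j' (insert j A))
          (coefM D c' j A * coefM D c j' (insert j A)))
      + (∑ j ∈ (insert t A)ᶜ, ∑ j' ∈ (insert t (insert j A))ᶜ,
        Finsupp.single (insert j' (insert j A))
          (coefM D c j A * coefM D c' j' (insert j A))) = 0 := by
  rw [← Finset.sum_add_distrib]
  simp_rw [← Finset.sum_add_distrib, ← Finsupp.single_add]
  rw [Finset.sum_sigma']
  refine Finset.sum_involution (fun p _ => ⟨p.2, p.1⟩) ?_ ?_ ?_ ?_
  · rintro ⟨j, j'⟩ hp
    simp only [Finset.mem_sigma, Finset.mem_compl, Finset.mem_insert, not_or] at hp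
    obtain ⟨⟨hjt, hjA⟩, hj't, hj'j, hj'A⟩ := hp
    rw [Finset.insert_comm j j', ← Finsupp.single_add, ← add_assoc,
      S1R D c c' A hjA hj'A (Ne.symm hj'j), Finsupp.single_zero]
  · rintro ⟨j, j'⟩ hp _
    simp only [Finset.mem_sigma, Finset.mem_compl, Finset.mem_insert, not_or] at hp
    intro hcontra
    exact hp.2.2.1 (congrArg Sigma.fst hcontra)
  · rintro ⟨j, j'⟩ hp
    simp only [Finset.mem_sigma, Finset.mem_compl, Finset.mem_insert, not_or] at hp ⊢
    exact ⟨⟨hp.2.1, hp.2.2.2⟩, hp.1.1, fun h => hp.2.2.1 h.symm, hp.1.2⟩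
  · rintro ⟨j, j'⟩ _; rfl

lemma core_case3 {A : Finset (Fin q)} (hl : 2 ≤ l) (h1 : (A ∩ Lset q l).card = l - 1)
    (hpiv : pivElt q l hq ∉ A)
    (hgapD : D (pivElt q l hq) ≤ (Lset q l).sup D) :
    sigmaMap k n q l hq D c (sigmaMap k n q l hq D c' (Finsupp.single A 1))
      + sigmaMap k n q l hq D c' (sigmaMap k n q l hq D c (Finsupp.single A 1)) = 0 := by
  obtain ⟨t, ht⟩ := sdiff_singleton_of_card hq hl h1
  obtain ⟨htL, htA⟩ := t_mem_props ht
  have hpivt : pivElt q l hq ≠ t := fun h => piv_not_mem hq (h ▸ htL)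
  have hLsub : Lset q l ⊆ insert t A := Lset_subset ht
  have hgapm : D (pivElt q l hq) ≤ (insert t A).sup D :=
    hgapD.trans (Finset.sup_mono hLsub)
  have expandM : ∀ u v : Fin q → MvPolynomial (Fin n) k,
      sigmaMap k n q l hq D v (sigTerm k n q D u A (insert t A)ᶜ)
        = (∑ j ∈ (insert t A)ᶜ, ∑ j' ∈ (insert t (insert j A))ᶜ,
            Finsupp.single (insert j' (insert j A))
              (coefM D u j A * coefM D v j' (insert j A)))
          + (∑ j ∈ (insert (pivElt q l hq) (insert t A))ᶜ, ∑ i ∈ Lset q l,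
            Finsupp.single ((insert (pivElt q l hq) (insert t (insert j A))) \ {i})
              (coefM D u j A * coefCorr D l (pivElt q l hq) v (insert j A) t i)) := by
    intro u v
    rw [sigTerm_sum, map_sum]
    have step : ∀ j ∈ (insert t A)ᶜ,
        sigmaMap k n q l hq D v (Finsupp.single (insert j A) (coefM D u j A))
          = (∑ j' ∈ (insert t (insert j A))ᶜ,
              Finsupp.single (insert j' (insert j A))
                (coefM D u j A * coefM D v j' (insert j A)))
            + (if j = pivElt q l hq then 0 else ∑ i ∈ Lset q l,
                Finsupp.single ((insert (pivElt q l hq) (insert t (insert j A))) \ {i})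
                  (coefM D u j A * coefCorr D l (pivElt q l hq) v (insert j A) t i)) := by
      intro j hj
      rw [Finset.mem_compl, Finset.mem_insert] at hj
      push_neg at hj
      obtain ⟨hjt, hjA⟩ := hj
      have hjL : j ∉ Lset q l := not_mem_Lset_of ht hjA hjt
      have hsd : Lset q l \ (insert j A) = {t} := sdiff_insert_of ht hjL
      have hcard := card_inter_of_sdiff_singleton hq hsd
      by_cases hjp : j = pivElt q l hq
      · subst hjp
        rw [sigma_single_ii hq D v _ _ hcard (Finset.mem_insert_self _ _), tOf_eq hq hsd,
          sigTerm_sum, Finset.smul_sum, if_pos rfl, add_zero]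
        refine Finset.sum_congr rfl fun j' _ => ?_
        rw [Finsupp.smul_single, smul_eq_mul]
      · have hpjA : pivElt q l hq ∉ insert j A := by
          rw [Finset.mem_insert]
          push_neg
          exact ⟨fun h => hjp h.symm, hpiv⟩
        rw [sigma_single_iii hq D v _ _ hcard hpjA, tOf_eq hq hsd, smul_add,
          sigTerm_sum, sigCorr_sum, Finset.smul_sum, Finset.smul_sum, if_neg hjp]
        congr 1
        · refine Finset.sum_congr rfl fun j' _ => ?_
          rw [Finsupp.smul_single, smul_eq_mul]
        · refine Finset.sum_congr rfl fun i _ => ?_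
          rw [Finsupp.smul_single, smul_eq_mul]
    rw [Finset.sum_congr rfl step, Finset.sum_add_distrib]
    congr 1
    have hsub : (insert (pivElt q l hq) (insert t A))ᶜ ⊆ (insert t A)ᶜ :=
      Finset.compl_subset_compl.mpr (Finset.subset_insert _ _)
    rw [← Finset.sum_subset hsub ?_]
    · refine Finset.sum_congr rfl fun x hx => ?_
      rw [Finset.mem_compl, Finset.mem_insert] at hx
      push_neg at hx
      rw [if_neg hx.1]
    · intro x hxJ hxJ2
      rw [Finset.mem_compl, not_not] at hxJ2
      rcases Finset.mem_insert.mp hxJ2 with rfl | hx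
      · rw [if_pos rfl]
      · exact absurd hx (Finset.mem_compl.mp hxJ)
  have expandK : ∀ u v : Fin q → MvPolynomial (Fin n) k,
      sigmaMap k n q l hq D v (sigCorr k n q l hq D u A t)
        = ∑ j ∈ (insert (pivElt q l hq) (insert t A))ᶜ, ∑ i ∈ Lset q l,
            Finsupp.single ((insert (pivElt q l hq) (insert t (insert j A))) \ {i})
              (coefCorr D l (pivElt q l hq) u A t i
                * coefM D v j ((insert (pivElt q l hq) (insert t A)) \ {i})) := by
    intro u v
    rw [sigCorr_sum, map_sum]
    have step : ∀ i ∈ Lset q l,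
        sigmaMap k n q l hq D v (Finsupp.single ((insert (pivElt q l hq) (insert t A)) \ {i})
            (coefCorr D l (pivElt q l hq) u A t i))
          = ∑ j ∈ (insert (pivElt q l hq) (insert t A))ᶜ,
              Finsupp.single (insert j ((insert (pivElt q l hq) (insert t A)) \ {i}))
                (coefCorr D l (pivElt q l hq) u A t i
                  * coefM D v j ((insert (pivElt q l hq) (insert t A)) \ {i})) := by
      intro i hiL
      have hsd := Bi_sdiff hq ht hiL
      have hcard := card_inter_of_sdiff_singleton hq hsd
      have hiT : i ∈ insert t A := hLsub hiL
      have hipiv : i ≠ pivElt q l hq := fun h => piv_not_mem hq (h ▸ hiL)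
      have hpivB : pivElt q l hq ∈ (insert (pivElt q l hq) (insert t A)) \ {i} := by
        rw [Finset.mem_sdiff, Finset.mem_singleton]
        exact ⟨Finset.mem_insert_self _ _, fun h => hipiv h.symm⟩
      have hins : insert i ((insert (pivElt q l hq) (insert t A)) \ {i})
          = insert (pivElt q l hq) (insert t A) := by
        rw [Finset.sdiff_singleton_eq_erase,
          Finset.insert_erase (Finset.mem_insert_of_mem hiT)]
      rw [sigma_single_ii hq D v _ _ hcard hpivB, tOf_eq hq hsd, hins,
        sigTerm_sum, Finset.smul_sum]
      refine Finset.sum_congr rfl fun j _ => ?_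
      rw [Finsupp.smul_single, smul_eq_mul]
    rw [Finset.sum_congr rfl step, Finset.sum_comm]
    refine Finset.sum_congr rfl fun j hj => Finset.sum_congr rfl fun i hiL => ?_
    have hij : j ≠ i := by
      rw [Finset.mem_compl] at hj
      exact fun h => hj (h ▸ Finset.mem_insert_of_mem (hLsub hiL))
    rw [insert_sdiff_set j i _ t A hij]
  rw [sigma_single_iii hq D c' A 1 h1 hpiv, sigma_single_iii hq D c A 1 h1 hpiv,
    one_smul, one_smul, tOf_eq hq ht, map_add, map_add, expandM c' c, expandK c' c,
    expandM c c', expandK c c']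
  refine six_split (MM_zero D c c' t A) ?_
  simp only [← Finset.sum_add_distrib, ← Finsupp.single_add]
  refine Finset.sum_eq_zero fun j hj => Finset.sum_eq_zero fun i hiL => ?_
  simp only [Finset.mem_compl, Finset.mem_insert, not_or] at hj
  obtain ⟨hjp, hjt, hjA⟩ := hj
  have hjL : j ∉ Lset q l := not_mem_Lset_of ht hjA hjt
  have hiT : i ∈ insert t A := hLsub hiL
  have hij : j ≠ i := fun h => (h ▸ (Finset.mem_insert.mp hiT)).elim hjt hjA
  rw [← add_assoc,
    S5R D c c' A l hjA htA hjt hpiv hpivt (piv_lt hq hjL hjp) hiT hij hgapm,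
    Finsupp.single_zero]

lemma MM4_zero (t1 t2 : Fin q) (A : Finset (Fin q)) :
    (∑ j ∈ Aᶜ, ∑ j' ∈ ((insert j A)ᶜ).filter
          (fun j' => ¬(j = t1 ∧ j' = t2) ∧ ¬(j = t2 ∧ j' = t1)),
        Finsupp.single (insert j' (insert j A))
          (coefM D c' j A * coefM D c j' (insert j A)))
      + (∑ j ∈ Aᶜ, ∑ j' ∈ ((insert j A)ᶜ).filter
          (fun j' => ¬(j = t1 ∧ j' = t2) ∧ ¬(j = t2 ∧ j' = t1)),
        Finsupp.single (insert j' (insert j A))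
          (coefM D c j A * coefM D c' j' (insert j A))) = 0 := by
  rw [← Finset.sum_add_distrib]
  simp_rw [← Finset.sum_add_distrib, ← Finsupp.single_add]
  rw [Finset.sum_sigma']
  refine Finset.sum_involution (fun p _ => ⟨p.2, p.1⟩) ?_ ?_ ?_ ?_
  · rintro ⟨j, j'⟩ hp
    simp only [Finset.mem_sigma, Finset.mem_compl, Finset.mem_filter, Finset.mem_insert,
      not_or] at hp
    obtain ⟨hjA, ⟨hj'j, hj'A⟩, _, _⟩ := hp
    rw [Finset.insert_comm j j', ← Finsupp.single_add, ← add_assoc,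
      S1R D c c' A hjA hj'A (Ne.symm hj'j), Finsupp.single_zero]
  · rintro ⟨j, j'⟩ hp _
    simp only [Finset.mem_sigma, Finset.mem_compl, Finset.mem_filter, Finset.mem_insert,
      not_or] at hp
    intro hcontra
    exact hp.2.1.1 (congrArg Sigma.fst hcontra)
  · rintro ⟨j, j'⟩ hp
    simp only [Finset.mem_sigma, Finset.mem_compl, Finset.mem_filter, Finset.mem_insert,
      not_or] at hp ⊢
    refine ⟨hp.2.1.2, ⟨fun h => hp.2.1.1 h.symm, hp.1⟩, ?_, ?_⟩ <;> tauto
  · rintro ⟨j, j'⟩ _; rfl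

lemma sdiff_pair_left {A : Finset (Fin q)} {t1 t2 : Fin q} (hne : t1 ≠ t2)
    (hpr : Lset q l \ A = {t1, t2}) : Lset q l \ insert t1 A = {t2} := by
  have h1 : t2 ∈ Lset q l \ A := by rw [hpr]; simp
  rw [Finset.mem_sdiff] at h1
  apply Finset.Subset.antisymm
  · intro x hx
    rw [Finset.mem_sdiff, Finset.mem_insert] at hx
    push_neg at hx
    obtain ⟨hxL, hxt1, hxA⟩ := hx
    have hx2 : x ∈ Lset q l \ A := Finset.mem_sdiff.mpr ⟨hxL, hxA⟩
    rw [hpr, Finset.mem_insert] at hx2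
    rcases hx2 with h | h
    · exact absurd h hxt1
    · exact h
  · intro x hx
    rw [Finset.mem_singleton] at hx
    rw [hx, Finset.mem_sdiff, Finset.mem_insert]
    push_neg
    exact ⟨h1.1, Ne.symm hne, h1.2⟩

/-- classification of `insert j A` in case IV, and the uniform inner index set. -/
lemma K_eq_t1 {A : Finset (Fin q)} {t1 t2 : Fin q} (hne : t1 ≠ t2) :
    ((insert t1 A)ᶜ).filter
        (fun j' => ¬(t1 = t1 ∧ j' = t2) ∧ ¬(t1 = t2 ∧ j' = t1))
      = (insert t2 (insert t1 A))ᶜ := by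
  ext x
  simp only [Finset.mem_filter, Finset.mem_compl, Finset.mem_insert, not_or]
  tauto

lemma K_eq_other {A : Finset (Fin q)} {t1 t2 j : Fin q} (h1 : j ≠ t1) (h2 : j ≠ t2) :
    ((insert j A)ᶜ).filter
        (fun j' => ¬(j = t1 ∧ j' = t2) ∧ ¬(j = t2 ∧ j' = t1))
      = (insert j A)ᶜ :=
  Finset.filter_true_of_mem fun x _ => ⟨fun hc => h1 hc.1, fun hc => h2 hc.1⟩

lemma core_case4a {A : Finset (Fin q)} (hl : 2 ≤ l) (h2 : (A ∩ Lset q l).card = l - 2)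
    (hpA : pivElt q l hq ∈ A) :
    sigmaMap k n q l hq D c (sigmaMap k n q l hq D c' (Finsupp.single A 1))
      + sigmaMap k n q l hq D c' (sigmaMap k n q l hq D c (Finsupp.single A 1)) = 0 := by
  obtain ⟨t1, t2, hne, hpr⟩ := sdiff_pair_of_card hq hl h2
  have hsd1 : Lset q l \ insert t1 A = {t2} := sdiff_pair_left hne hpr
  have hsd2 : Lset q l \ insert t2 A = {t1} := by
    rw [Finset.pair_comm] at hpr
    exact sdiff_pair_left (Ne.symm hne) hpr
  have hAcard : (A ∩ Lset q l).card ≠ l - 1 := by omega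
  have ht1 : t1 ∈ Lset q l ∧ t1 ∉ A := by
    have hx : t1 ∈ Lset q l \ A := by rw [hpr]; simp
    exact Finset.mem_sdiff.mp hx
  have ht2 : t2 ∈ Lset q l ∧ t2 ∉ A := by
    have hx : t2 ∈ Lset q l \ A := by rw [hpr]; simp
    exact Finset.mem_sdiff.mp hx
  have expand : ∀ u v : Fin q → MvPolynomial (Fin n) k,
      sigmaMap k n q l hq D v (sigTerm k n q D u A Aᶜ)
        = ∑ j ∈ Aᶜ, ∑ j' ∈ ((insert j A)ᶜ).filter
            (fun j' => ¬(j = t1 ∧ j' = t2) ∧ ¬(j = t2 ∧ j' = t1)),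
            Finsupp.single (insert j' (insert j A))
              (coefM D u j A * coefM D v j' (insert j A)) := by
    intro u v
    rw [sigTerm_sum, map_sum]
    refine Finset.sum_congr rfl fun j hj => ?_
    rw [Finset.mem_compl] at hj
    by_cases hjt1 : j = t1
    · rw [hjt1, K_eq_t1 hne, sigma_single_ii hq D v _ _ (card_inter_of_sdiff_singleton hq hsd1)
          (Finset.mem_insert_of_mem hpA), tOf_eq hq hsd1, sigTerm_sum, Finset.smul_sum]
      refine Finset.sum_congr rfl fun j' _ => ?_
      rw [Finsupp.smul_single, smul_eq_mul]
    · by_cases hjt2 : j = t2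
      · have hK : ((insert t2 A)ᶜ).filter
              (fun j' => ¬(t2 = t1 ∧ j' = t2) ∧ ¬(t2 = t2 ∧ j' = t1))
            = (insert t1 (insert t2 A))ᶜ := by
          ext x
          simp only [Finset.mem_filter, Finset.mem_compl, Finset.mem_insert, not_or]
          tauto
        rw [hjt2, hK, sigma_single_ii hq D v _ _ (card_inter_of_sdiff_singleton hq hsd2)
            (Finset.mem_insert_of_mem hpA), tOf_eq hq hsd2, sigTerm_sum, Finset.smul_sum]
        refine Finset.sum_congr rfl fun j' _ => ?_
        rw [Finsupp.smul_single, smul_eq_mul]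
      · have hjL : j ∉ Lset q l := fun hjLmem => by
          have hx : j ∈ Lset q l \ A := Finset.mem_sdiff.mpr ⟨hjLmem, hj⟩
          rw [hpr, Finset.mem_insert, Finset.mem_singleton] at hx
          tauto
        have hcard : ((insert j A) ∩ Lset q l).card ≠ l - 1 := by
          rw [card_inter_insert hj, if_neg hjL]
          omega
        rw [K_eq_other hjt1 hjt2, sigma_single_i hq D v _ _ hcard, sigTerm_sum,
          Finset.smul_sum]
        refine Finset.sum_congr rfl fun j' _ => ?_
        rw [Finsupp.smul_single, smul_eq_mul]
  rw [sigma_single_i hq D c' A 1 hAcard, sigma_single_i hq D c A 1 hAcard,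
    one_smul, one_smul, expand c' c, expand c c']
  exact MM4_zero D c c' t1 t2 A

lemma four_split {M : Type*} [AddCommGroup M] {a1 a2 b1 b2 : M}
    (h1 : a1 + b1 = 0) (h2 : a2 + b2 = 0) : (a1 + a2) + (b1 + b2) = 0 := by
  calc (a1 + a2) + (b1 + b2) = (a1 + b1) + (a2 + b2) := by abel
    _ = 0 := by rw [h1, h2, add_zero]

lemma core_case4b {A : Finset (Fin q)} (hl : 2 ≤ l) (h2 : (A ∩ Lset q l).card = l - 2)
    (hpA : pivElt q l hq ∉ A)
    (hgapD : D (pivElt q l hq) ≤ (Lset q l).sup D) :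
    sigmaMap k n q l hq D c (sigmaMap k n q l hq D c' (Finsupp.single A 1))
      + sigmaMap k n q l hq D c' (sigmaMap k n q l hq D c (Finsupp.single A 1)) = 0 := by
  obtain ⟨t1, t2, hne, hpr⟩ := sdiff_pair_of_card hq hl h2
  have hsd1 : Lset q l \ insert t1 A = {t2} := sdiff_pair_left hne hpr
  have hsd2 : Lset q l \ insert t2 A = {t1} := by
    rw [Finset.pair_comm] at hpr
    exact sdiff_pair_left (Ne.symm hne) hpr
  have hAcard : (A ∩ Lset q l).card ≠ l - 1 := by omega
  have ht1 : t1 ∈ Lset q l ∧ t1 ∉ A := by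
    have hx : t1 ∈ Lset q l \ A := by rw [hpr]; simp
    exact Finset.mem_sdiff.mp hx
  have ht2 : t2 ∈ Lset q l ∧ t2 ∉ A := by
    have hx : t2 ∈ Lset q l \ A := by rw [hpr]; simp
    exact Finset.mem_sdiff.mp hx
  have hpt1 : pivElt q l hq ≠ t1 := fun h => piv_not_mem hq (h ▸ ht1.1)
  have hpt2 : pivElt q l hq ≠ t2 := fun h => piv_not_mem hq (h ▸ ht2.1)
  have hgapm : D (pivElt q l hq) ≤ (insert t2 (insert t1 A)).sup D := by
    refine hgapD.trans (Finset.sup_mono ?_)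
    intro x hx
    by_cases hxA : x ∈ A
    · simp [hxA]
    · have h3 : x ∈ Lset q l \ A := Finset.mem_sdiff.mpr ⟨hx, hxA⟩
      rw [hpr, Finset.mem_insert, Finset.mem_singleton] at h3
      rcases h3 with rfl | rfl <;> simp
  have expand : ∀ u v : Fin q → MvPolynomial (Fin n) k,
      sigmaMap k n q l hq D v (sigTerm k n q D u A Aᶜ)
        = (∑ j ∈ Aᶜ, ∑ j' ∈ ((insert j A)ᶜ).filter
            (fun j' => ¬(j = t1 ∧ j' = t2) ∧ ¬(j = t2 ∧ j' = t1)),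
            Finsupp.single (insert j' (insert j A))
              (coefM D u j A * coefM D v j' (insert j A)))
          + ((∑ i ∈ Lset q l,
              Finsupp.single ((insert (pivElt q l hq) (insert t2 (insert t1 A))) \ {i})
                (coefM D u t1 A * coefCorr D l (pivElt q l hq) v (insert t1 A) t2 i))
            + (∑ i ∈ Lset q l,
              Finsupp.single ((insert (pivElt q l hq) (insert t2 (insert t1 A))) \ {i})
                (coefM D u t2 A * coefCorr D l (pivElt q l hq) v (insert t2 A) t1 i))) := by
    intro u v
    rw [sigTerm_sum, map_sum]
    have step : ∀ j ∈ Aᶜ,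
        sigmaMap k n q l hq D v (Finsupp.single (insert j A) (coefM D u j A))
          = (∑ j' ∈ ((insert j A)ᶜ).filter
              (fun j' => ¬(j = t1 ∧ j' = t2) ∧ ¬(j = t2 ∧ j' = t1)),
              Finsupp.single (insert j' (insert j A))
                (coefM D u j A * coefM D v j' (insert j A)))
            + (if j = t1 then ∑ i ∈ Lset q l,
                Finsupp.single ((insert (pivElt q l hq) (insert t2 (insert t1 A))) \ {i})
                  (coefM D u t1 A * coefCorr D l (pivElt q l hq) v (insert t1 A) t2 i)
              else if j = t2 then ∑ i ∈ Lset q l,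
                Finsupp.single ((insert (pivElt q l hq) (insert t2 (insert t1 A))) \ {i})
                  (coefM D u t2 A * coefCorr D l (pivElt q l hq) v (insert t2 A) t1 i)
              else 0) := by
      intro j hj
      rw [Finset.mem_compl] at hj
      by_cases hjt1 : j = t1
      · have hpmem : pivElt q l hq ∉ insert t1 A := by
          rw [Finset.mem_insert]
          push_neg
          exact ⟨hpt1, hpA⟩
        rw [hjt1, K_eq_t1 hne, sigma_single_iii hq D v _ _ (card_inter_of_sdiff_singleton hq hsd1)
            hpmem, tOf_eq hq hsd1, if_pos rfl, smul_add, sigTerm_sum, sigCorr_sum,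
          Finset.smul_sum, Finset.smul_sum]
        congr 1
        · refine Finset.sum_congr rfl fun j' _ => ?_
          rw [Finsupp.smul_single, smul_eq_mul]
        · refine Finset.sum_congr rfl fun i _ => ?_
          rw [Finsupp.smul_single, smul_eq_mul]
      · by_cases hjt2 : j = t2
        · have hpmem : pivElt q l hq ∉ insert t2 A := by
            rw [Finset.mem_insert]
            push_neg
            exact ⟨hpt2, hpA⟩
          have hK : ((insert t2 A)ᶜ).filter
                (fun j' => ¬(t2 = t1 ∧ j' = t2) ∧ ¬(t2 = t2 ∧ j' = t1))
              = (insert t1 (insert t2 A))ᶜ := by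
            ext x
            simp only [Finset.mem_filter, Finset.mem_compl, Finset.mem_insert, not_or]
            tauto
          rw [hjt2, hK, sigma_single_iii hq D v _ _ (card_inter_of_sdiff_singleton hq hsd2)
              hpmem, tOf_eq hq hsd2, if_neg (Ne.symm hne), if_pos rfl, smul_add, sigTerm_sum,
            sigCorr_sum, Finset.smul_sum, Finset.smul_sum]
          congr 1
          · refine Finset.sum_congr rfl fun j' _ => ?_
            rw [Finsupp.smul_single, smul_eq_mul]
          · rw [Finset.insert_comm t1 t2 A]
            refine Finset.sum_congr rfl fun i _ => ?_
            rw [Finsupp.smul_single, smul_eq_mul]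
        · have hjL : j ∉ Lset q l := fun hjLmem => by
            have hx : j ∈ Lset q l \ A := Finset.mem_sdiff.mpr ⟨hjLmem, hj⟩
            rw [hpr, Finset.mem_insert, Finset.mem_singleton] at hx
            tauto
          have hcard : ((insert j A) ∩ Lset q l).card ≠ l - 1 := by
            rw [card_inter_insert hj, if_neg hjL]
            omega
          rw [K_eq_other hjt1 hjt2, sigma_single_i hq D v _ _ hcard, sigTerm_sum,
            Finset.smul_sum, if_neg hjt1, if_neg hjt2, add_zero]
          refine Finset.sum_congr rfl fun j' _ => ?_
          rw [Finsupp.smul_single, smul_eq_mul]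
    rw [Finset.sum_congr rfl step, Finset.sum_add_distrib]
    congr 1
    have hsub : ({t1, t2} : Finset (Fin q)) ⊆ Aᶜ := by
      intro x hx
      rw [Finset.mem_insert, Finset.mem_singleton] at hx
      rw [Finset.mem_compl]
      rcases hx with rfl | rfl
      · exact ht1.2
      · exact ht2.2
    rw [← Finset.sum_subset hsub ?_, Finset.sum_pair hne, if_pos rfl, if_neg (Ne.symm hne),
      if_pos rfl]
    intro x hxA hxp
    rw [Finset.mem_insert, Finset.mem_singleton] at hxp
    push_neg at hxp
    rw [if_neg hxp.1, if_neg hxp.2]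
  rw [sigma_single_i hq D c' A 1 hAcard, sigma_single_i hq D c A 1 hAcard,
    one_smul, one_smul, expand c' c, expand c c']
  refine four_split (MM4_zero D c c' t1 t2 A) ?_
  simp only [← Finset.sum_add_distrib, ← Finsupp.single_add]
  refine Finset.sum_eq_zero fun i hiL => ?_
  have hre : (coefM D c' t1 A * coefCorr D l (pivElt q l hq) c (insert t1 A) t2 i
        + coefM D c' t2 A * coefCorr D l (pivElt q l hq) c (insert t2 A) t1 i)
        + (coefM D c t1 A * coefCorr D l (pivElt q l hq) c' (insert t1 A) t2 i
        + coefM D c t2 A * coefCorr D l (pivElt q l hq) c' (insert t2 A) t1 i)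
      = coefM D c' t1 A * coefCorr D l (pivElt q l hq) c (insert t1 A) t2 i
        + coefM D c t1 A * coefCorr D l (pivElt q l hq) c' (insert t1 A) t2 i
        + coefM D c' t2 A * coefCorr D l (pivElt q l hq) c (insert t2 A) t1 i
        + coefM D c t2 A * coefCorr D l (pivElt q l hq) c' (insert t2 A) t1 i := by
    ring
  rw [hre, S4R D c c' i A l ht1.2 ht2.2 hne hgapm, Finsupp.single_zero]


lemma core (hl : 2 ≤ l)
    (hgapD : D (pivElt q l hq) ≤ (Lset q l).sup D) (A : Finset (Fin q)) :
    sigmaMap k n q l hq D c (sigmaMap k n q l hq D c' (Finsupp.single A 1))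
      + sigmaMap k n q l hq D c' (sigmaMap k n q l hq D c (Finsupp.single A 1)) = 0 := by
  by_cases h1 : (A ∩ Lset q l).card = l - 1
  · by_cases hp : pivElt q l hq ∈ A
    · exact core_case2 hq D c c' hl h1 hp
    · exact core_case3 hq D c c' hl h1 hp hgapD
  · by_cases h2 : (A ∩ Lset q l).card = l - 2
    · by_cases hp : pivElt q l hq ∈ A
      · exact core_case4a hq D c c' hl h2 hp
      · exact core_case4b hq D c c' hl h2 hp hgapD
    · exact core_case1 hq D c c' hl h1 h2

end Main
end SA

/-- **Anticommutativity of the homotopies.**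
For any `1 ≤ s < s' ≤ r`, the map `σ_{e_s}σ_{e_{s'}} + σ_{e_{s'}}σ_{e_s}` is
identically zero on the pivot resolution `T_{1,…,l}`. -/
theorem sigma_anticomm {k : Type*} [Field k] {n q l : ℕ}
    (hl : 2 ≤ l) (hq : l < q)
    (D : Fin q → (Fin n →₀ ℕ))
    (hne : ∀ i : Fin q, D i ≠ 0)
    (hmin : ∀ i j : Fin q, i ≠ j → ¬ lcmMono k n q D {i} ∣ lcmMono k n q D {j})
    (hgap : lcmMono k n q D {pivElt q l hq} ∣ lcmMono k n q D (Lset q l))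
    (r : ℕ) (a : Fin r → Fin q → MvPolynomial (Fin n) k)
    (s s' : Fin r) (hss' : s < s') :
    ∀ x ∈ subcx k n q (pivotΩ (Lset q l)),
      sigmaMap k n q l hq D (a s) (sigmaMap k n q l hq D (a s') x) +
        sigmaMap k n q l hq D (a s') (sigmaMap k n q l hq D (a s) x) = 0 := by
  intro x hx
  clear hx
  have hgapD : D (pivElt q l hq) ≤ (Lset q l).sup D := by
    rw [lcmMono, lcmMono, MvPolynomial.monomial_dvd_monomial] at hgap
    rcases hgap.1 with h | h
    · exact absurd h one_ne_zero
    · simpa using h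
  have key : ∀ (A : Finset (Fin q)) (p : MvPolynomial (Fin n) k),
      sigmaMap k n q l hq D (a s) (sigmaMap k n q l hq D (a s') (Finsupp.single A p))
        + sigmaMap k n q l hq D (a s') (sigmaMap k n q l hq D (a s) (Finsupp.single A p))
          = 0 := by
    intro A p
    have h1 : (Finsupp.single A p : TotMod k n q) = p • Finsupp.single A 1 := by
      rw [Finsupp.smul_single, smul_eq_mul, mul_one]
    rw [h1, map_smul, map_smul, map_smul, map_smul, ← smul_add,
      SA.core hq D (a s) (a s') hl hgapD A, smul_zero]
  induction x using Finsupp.induction_linear with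
  | zero => simp
  | add f g hf hg =>
    rw [map_add, map_add, map_add, map_add, add_add_add_comm, hf, hg, add_zero]
  | single A p => exact key A p
end

section
/- For any s ∈ [r], the composite σ_{e_s} ∘ σ_{e_s} is identically zero on the pivot resolution T_{1,…,l}. -/
open MvPolynomial Finset

noncomputable section
namespace Aux1

theorem neg_one_pow_sum_eq_zero {a b : ℕ} (h : (a + b) % 2 = 1) : (-1 : ℤ) ^ a + (-1 : ℤ) ^ b = 0 := by
  rcases Nat.even_or_odd a with ha | ha
  · have hb : Odd b := by rw [Nat.even_iff] at ha; rw [Nat.odd_iff]; omega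
    rw [ha.neg_one_pow, hb.neg_one_pow]; ring
  · have hb : Even b := by rw [Nat.odd_iff] at ha; rw [Nat.even_iff]; omega
    rw [ha.neg_one_pow, hb.neg_one_pow]; ring

variable {α : Type*} [LinearOrder α] [DecidableEq α]

/-- count of elements of `S` less than `x` -/
def Ncnt (S : Finset α) (x : α) : ℕ := (S.filter (· < x)).card

theorem fsign_single (x : α) (S : Finset α) (h : x ∉ S) :
    fsign {x} S = (-1 : ℤ) ^ (Ncnt S x) := by
  rw [fsign, if_pos (by simp [Finset.singleton_inter_of_notMem h])]
  congr 1
  rw [Finset.singleton_product, Finset.filter_map, Finset.card_map]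
  rfl

theorem fsign_zero {x : α} {S : Finset α} (h : x ∈ S) : fsign {x} S = 0 := by
  rw [fsign, if_neg (by simp [Finset.singleton_inter_of_mem h])]

theorem Ncnt_insert {y : α} {S : Finset α} (h : y ∉ S) (x : α) :
    Ncnt (insert y S) x = Ncnt S x + if y < x then 1 else 0 := by
  unfold Ncnt
  rw [Finset.filter_insert]
  by_cases hyx : y < x
  · rw [if_pos hyx, if_pos hyx, Finset.card_insert_of_notMem (by simp [h])]
  · rw [if_neg hyx, if_neg hyx, add_zero]

theorem Ncnt_sdiff (S : Finset α) (i x : α) :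
    Ncnt (S \ {i}) x = Ncnt S x - (if i ∈ S ∧ i < x then 1 else 0) := by
  unfold Ncnt
  rw [← Finset.erase_eq, Finset.filter_erase]
  by_cases h : i ∈ S ∧ i < x
  · rw [if_pos h, Finset.card_erase_of_mem (by simp [h.1, h.2])]
  · rw [if_neg h, Nat.sub_zero]
    congr 1
    apply Finset.erase_eq_of_notMem
    intro hmem
    rw [Finset.mem_filter] at hmem
    exact h hmem

/-- basic anticommutation -/
theorem sign_swap {j j' : α} {A : Finset α} (hjj : j ≠ j') (hj : j ∉ A) (hj' : j' ∉ A) :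
    fsign {j} A * fsign {j'} (insert j A) + fsign {j'} A * fsign {j} (insert j' A) = 0 := by
  rw [fsign_single j A hj, fsign_single j' A hj',
    fsign_single j' (insert j A) (by simp [hjj.symm, hj']),
    fsign_single j (insert j' A) (by simp [hjj, hj]),
    Ncnt_insert hj, Ncnt_insert hj', ← pow_add, ← pow_add]
  apply neg_one_pow_sum_eq_zero
  rcases lt_or_gt_of_ne hjj with h | h
  · rw [if_pos h, if_neg (not_lt_of_gt h)]; omega
  · rw [if_neg (not_lt_of_gt h), if_pos h]; omega

/-- the (b)/(c) sign identity -/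
theorem sign_corr {A : Finset α} {t i j p : α}
    (ht : t ∉ A) (hj : j ∉ A) (hp : p ∉ A) (hpt : p ≠ t)
    (hi : i ∈ insert t A) (htj : t < j) (hij : i < j) (hpj : p < j) :
    fsign {j} A * (fsign {t} (insert j A) * fsign {i} ((insert t (insert j A)) \ {i})) +
      fsign {t} A * fsign {i} ((insert t A) \ {i}) * fsign {j} ((insert p (insert t A)) \ {i}) = 0 := by
  have htj' : t ≠ j := ne_of_lt htj
  have hij' : i ≠ j := ne_of_lt hij
  have hpj' : p ≠ j := ne_of_lt hpj
  have hpA : p ∉ insert t A := by simp [hpt, hp]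
  have hjA2 : t ∉ insert j A := by simp [htj', ht]
  have hji : ¬ (j < i) := not_lt_of_gt hij
  have hmem : i ∈ insert p (insert t A) := Finset.mem_insert_of_mem hi
  have c1 : Ncnt (insert j A) t = Ncnt A t := by
    rw [Ncnt_insert hj]; simp [not_lt_of_gt htj]
  have c2 : Ncnt ((insert t (insert j A)) \ {i}) i = Ncnt A i + (if t < i then 1 else 0) := by
    rw [Ncnt_sdiff, Ncnt_insert hjA2, Ncnt_insert hj]
    simp [hji]
  have c3 : Ncnt ((insert t A) \ {i}) i = Ncnt A i + (if t < i then 1 else 0) := by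
    rw [Ncnt_sdiff, Ncnt_insert ht]
    simp
  have c4 : Ncnt ((insert p (insert t A)) \ {i}) j = Ncnt A j + 1 := by
    rw [Ncnt_sdiff, Ncnt_insert hpA, Ncnt_insert ht]
    rw [if_pos htj, if_pos hpj, if_pos ⟨hmem, hij⟩]
    omega
  rw [fsign_single j A hj, fsign_single t A ht,
    fsign_single t (insert j A) hjA2,
    fsign_single i ((insert t (insert j A)) \ {i}) (by simp),
    fsign_single i ((insert t A) \ {i}) (by simp),
    fsign_single j ((insert p (insert t A)) \ {i}) (by simp [hpj'.symm, htj'.symm, hj]),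
    c1, c2, c3, c4, ← pow_add, ← pow_add, ← pow_add]
  apply neg_one_pow_sum_eq_zero
  rcases Nat.eq_zero_or_pos (if t < i then 1 else 0) with h | h <;> omega

end Aux1

namespace Aux2

variable {n : ℕ}

local notation "M" => (Fin n →₀ ℕ)

theorem sup_apply' (a b : M) (x : Fin n) : (a ⊔ b) x = max (a x) (b x) := Finsupp.sup_apply a b x

theorem M1 (a b s : M) :
    (a + s - (a ⊔ s)) + (b + (a ⊔ s) - (b ⊔ (a ⊔ s))) =
      (b + s - (b ⊔ s)) + (a + (b ⊔ s) - (a ⊔ (b ⊔ s))) := by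
  ext x
  simp only [Finsupp.add_apply, Finsupp.tsub_apply, Finsupp.sup_apply]
  omega

theorem M2 (a b s g : M) (hg : g ≤ a ⊔ (b ⊔ s)) :
    (a + s - (a ⊔ s)) + (b + (a ⊔ s) - g) = (b + s - (b ⊔ s)) + (a + (b ⊔ s) - g) := by
  ext x
  have := Finsupp.le_def.mp hg x
  simp only [Finsupp.sup_apply] at this
  simp only [Finsupp.add_apply, Finsupp.tsub_apply, Finsupp.sup_apply]
  omega

theorem M3 (a t s bb : M) (hb : bb ≤ t ⊔ s) :
    (a + s - (a ⊔ s)) + (t + (a ⊔ s) - (a ⊔ bb)) = (t + s - bb) + (a + bb - (a ⊔ bb)) := by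
  ext x
  have := Finsupp.le_def.mp hb x
  simp only [Finsupp.sup_apply] at this
  simp only [Finsupp.add_apply, Finsupp.tsub_apply, Finsupp.sup_apply]
  omega

variable {k : Type*} [Field k]

theorem prod_form (σ1 σ2 : ℤ) (u v : MvPolynomial (Fin n) k) (e1 e2 : M) :
    ((σ1 : MvPolynomial (Fin n) k) * u * monomial e1 (1 : k)) *
      ((σ2 : MvPolynomial (Fin n) k) * v * monomial e2 (1 : k)) =
    ((σ1 * σ2 : ℤ) : MvPolynomial (Fin n) k) * (u * v) * monomial (e1 + e2) (1 : k) := by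
  rw [show monomial (e1 + e2) (1 : k) = monomial e1 (1:k) * monomial e2 (1:k) by
    rw [monomial_mul, one_mul]]
  push_cast
  ring

theorem prod_form2 (σ1 σ2 σ3 : ℤ) (w u v : MvPolynomial (Fin n) k) (e1 e2 : M) :
    ((σ1 : MvPolynomial (Fin n) k) * u * monomial e1 (1 : k)) *
      (w * (σ2 : MvPolynomial (Fin n) k) * v * (σ3 : MvPolynomial (Fin n) k) * monomial e2 (1 : k)) =
    w * ((σ1 * σ2 * σ3 : ℤ) : MvPolynomial (Fin n) k) * (u * v) * monomial (e1 + e2) (1 : k) := by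
  rw [show monomial (e1 + e2) (1 : k) = monomial e1 (1:k) * monomial e2 (1:k) by
    rw [monomial_mul, one_mul]]
  push_cast
  ring

theorem prod_form3 (σ1 σ2 σ3 : ℤ) (w u v : MvPolynomial (Fin n) k) (e1 e2 : M) :
    (w * (σ2 : MvPolynomial (Fin n) k) * v * (σ3 : MvPolynomial (Fin n) k) * monomial e2 (1 : k)) *
      ((σ1 : MvPolynomial (Fin n) k) * u * monomial e1 (1 : k)) =
    w * ((σ2 * σ3 * σ1 : ℤ) : MvPolynomial (Fin n) k) * (v * u) * monomial (e2 + e1) (1 : k) := by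
  rw [show monomial (e2 + e1) (1 : k) = monomial e2 (1:k) * monomial e1 (1:k) by
    rw [monomial_mul, one_mul]]
  push_cast
  ring

end Aux2

namespace AuxMain

open Aux1 Aux2

section Main
variable {k : Type*} [Field k] {n q l : ℕ} (hq : l < q)
  (D : Fin q → (Fin n →₀ ℕ)) (c : Fin q → MvPolynomial (Fin n) k)

/-- abbreviation for the basic coefficient -/
def Wc (A : Finset (Fin q)) (j : Fin q) : MvPolynomial (Fin n) k :=
  (fsign {j} A : MvPolynomial (Fin n) k) * c j *
      monomial (D j + A.sup D - (insert j A).sup D) (1 : k)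

theorem sigTerm_eq (A J : Finset (Fin q)) :
    sigTerm k n q D c A J = ∑ j ∈ J, Finsupp.single (insert j A) (Wc D c A j) := rfl

/-- abbreviation for the correction coefficient -/
def Cc (A : Finset (Fin q)) (t i : Fin q) : MvPolynomial (Fin n) k :=
  (-1 : MvPolynomial (Fin n) k) ^ (l + 1) *
      (fsign {t} A : MvPolynomial (Fin n) k) * c t *
      (fsign {i} (insert t A \ {i}) : MvPolynomial (Fin n) k) *
      monomial (D t + A.sup D - ((insert (pivElt q l hq) (insert t A)) \ {i}).sup D)
        (1 : k)

theorem sigCorr_eq (A : Finset (Fin q)) (t : Fin q) :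
    sigCorr k n q l hq D c A t = ∑ i ∈ Lset q l,
      Finsupp.single ((insert (pivElt q l hq) (insert t A)) \ {i}) (Cc hq D c A t i) := rfl

/-- the value of `sigmaMap` on a basis vector -/
def Ffun (A : Finset (Fin q)) : TotMod k n q :=
  if (A ∩ Lset q l).card ≠ l - 1 then
      sigTerm k n q D c A Aᶜ
    else if pivElt q l hq ∈ A then
      sigTerm k n q D c A (insert (tOf q l hq A) A)ᶜ
    else
      sigTerm k n q D c A (insert (tOf q l hq A) A)ᶜ +
        sigCorr k n q l hq D c A (tOf q l hq A)

theorem sigmaMap_single (A : Finset (Fin q)) (r : MvPolynomial (Fin n) k) :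
    sigmaMap k n q l hq D c (Finsupp.single A r) = r • Ffun hq D c A := by
  rw [sigmaMap, Finsupp.linearCombination_single]; rfl

theorem pv_not_mem_L : pivElt q l hq ∉ Lset q l := by
  simp [Lset, pivElt]

theorem mem_L_iff {x : Fin q} : x ∈ Lset q l ↔ (x : ℕ) < l := by simp [Lset]

include hq in
theorem card_L : (Lset q l).card = l := by
  have : Lset q l = Finset.Iio ⟨l, hq⟩ := by
    ext x; simp [Lset, Fin.lt_def]
  rw [this, Fin.card_Iio]

include hq in
theorem card_inter_lt {A : Finset (Fin q)} (hA : ¬ Lset q l ⊆ A) :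
    (A ∩ Lset q l).card < l := by
  rcases lt_or_eq_of_le (le_trans (Finset.card_le_card (Finset.inter_subset_right))
    (le_of_eq (card_L hq))) with h | h
  · exact h
  · exfalso
    have : A ∩ Lset q l = Lset q l :=
      Finset.eq_of_subset_of_card_le Finset.inter_subset_right (by rw [card_L hq, h])
    exact hA (fun x hx => (Finset.mem_inter.mp (this ▸ hx)).1)

include hq in
theorem sdiff_card' (A : Finset (Fin q)) :
    (Lset q l \ A).card + (A ∩ Lset q l).card = l := by
  rw [Finset.inter_comm]
  rw [Finset.card_sdiff_add_card_inter]
  exact card_L hq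

theorem tOf_eq {A : Finset (Fin q)} {t : Fin q} (h : Lset q l \ A = {t}) :
    tOf q l hq A = t := by
  have hne : (Lset q l \ A).Nonempty := by rw [h]; exact Finset.singleton_nonempty t
  unfold tOf
  rw [dif_pos hne]
  have h2 : ∀ x ∈ Lset q l \ A, x = t := by
    intro x hx
    rw [h] at hx
    simpa using hx
  exact h2 _ (Finset.min'_mem _ hne)

include hq in
theorem sdiff_eq_singleton {A : Finset (Fin q)} (hl : 2 ≤ l)
    (hc : (A ∩ Lset q l).card = l - 1) : ∃ t, Lset q l \ A = {t} := by
  have h1 := sdiff_card' hq A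
  exact Finset.card_eq_one.mp (by omega)

theorem Wc_zero {A : Finset (Fin q)} {j : Fin q} (h : j ∈ A) : Wc D c A j = 0 := by
  simp [Wc, fsign_zero h]

theorem Wc_swap {A : Finset (Fin q)} {j j' : Fin q} (hjj : j ≠ j') :
    Wc D c A j * Wc D c (insert j A) j' + Wc D c A j' * Wc D c (insert j' A) j = 0 := by
  by_cases hj : j ∈ A
  · rw [Wc_zero D c hj, Wc_zero D c (Finset.mem_insert_of_mem hj : j ∈ insert j' A)]; ring
  by_cases hj' : j' ∈ A
  · rw [Wc_zero D c hj', Wc_zero D c (Finset.mem_insert_of_mem hj' : j' ∈ insert j A)]; ring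
  have h : fsign {j} A * fsign {j'} (insert j A)
      = -(fsign {j'} A * fsign {j} (insert j' A)) := by
    linarith [Aux1.sign_swap hjj hj hj']
  unfold Wc
  rw [prod_form, prod_form]
  simp only [Finset.sup_insert]
  rw [Aux2.M1 (D j) (D j') (A.sup D), h]
  push_cast
  ring

theorem gap_le (hgap : lcmMono k n q D {pivElt q l hq} ∣ lcmMono k n q D (Lset q l)) :
    D (pivElt q l hq) ≤ (Lset q l).sup D := by
  rw [lcmMono, lcmMono, Finset.sup_singleton] at hgap
  rcases (MvPolynomial.monomial_dvd_monomial.mp hgap).1 with h | h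
  · exact absurd h one_ne_zero
  · exact h

theorem CS2coef {A : Finset (Fin q)} {t1 t2 i : Fin q} (h12 : t1 ≠ t2)
    (h1 : t1 ∉ A) (h2 : t2 ∉ A)
    (hg : ((insert (pivElt q l hq) (insert t2 (insert t1 A))) \ {i}).sup D
        ≤ D t1 ⊔ (D t2 ⊔ A.sup D)) :
    Wc D c A t1 * Cc hq D c (insert t1 A) t2 i
      + Wc D c A t2 * Cc hq D c (insert t2 A) t1 i = 0 := by
  have h : fsign {t1} A * fsign {t2} (insert t1 A)
      = -(fsign {t2} A * fsign {t1} (insert t2 A)) := by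
    linarith [Aux1.sign_swap h12 h1 h2]
  unfold Wc Cc
  rw [prod_form2, prod_form2]
  rw [Finset.insert_comm t1 t2 A]
  simp only [Finset.sup_insert]
  rw [Aux2.M2 (D t1) (D t2) (A.sup D) _ hg]
  rw [show fsign {t1} A * fsign {t2} (insert t1 A)
        * fsign {i} (insert t2 (insert t1 A) \ {i})
      = -(fsign {t2} A * fsign {t1} (insert t2 A)
        * fsign {i} (insert t2 (insert t1 A) \ {i})) by rw [h]; ring]
  push_cast
  ring

theorem CS4coef {A : Finset (Fin q)} {t i j : Fin q}
    (ht : t ∉ A) (hj : j ∉ A) (hp : pivElt q l hq ∉ A) (hpt : pivElt q l hq ≠ t)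
    (hi : i ∈ insert t A) (htj : t < j) (hij : i < j) (hpj : pivElt q l hq < j)
    (hbb : ((insert (pivElt q l hq) (insert t A)) \ {i}).sup D ≤ D t ⊔ A.sup D)
    (hsetj : insert j ((insert (pivElt q l hq) (insert t A)) \ {i})
        = (insert (pivElt q l hq) (insert t (insert j A))) \ {i}) :
    Wc D c A j * Cc hq D c (insert j A) t i
      + Cc hq D c A t i * Wc D c ((insert (pivElt q l hq) (insert t A)) \ {i}) j = 0 := by
  have hs := Aux1.sign_corr ht hj hp hpt hi htj hij hpj
  rw [← mul_assoc] at hs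
  have h : fsign {j} A * fsign {t} (insert j A) * fsign {i} (insert t (insert j A) \ {i})
      = -(fsign {t} A * fsign {i} (insert t A \ {i}) *
          fsign {j} ((insert (pivElt q l hq) (insert t A)) \ {i})) := by
    linarith [hs]
  unfold Wc Cc
  rw [prod_form2, prod_form3]
  rw [← hsetj]
  simp only [Finset.sup_insert]
  rw [Aux2.M3 (D j) (D t) (A.sup D) _ hbb]
  rw [h]
  push_cast
  ring

theorem DoubleZero (A : Finset (Fin q)) :
    ∑ j : Fin q, ∑ j' : Fin q,
      Finsupp.single (insert j' (insert j A)) (Wc D c A j * Wc D c (insert j A) j') = 0 := by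
  rw [← Finset.sum_product']
  apply Finset.sum_ninvolution Prod.swap
  · intro z
    by_cases h : z.1 = z.2
    · have hz0 : Wc D c (insert z.1 A) z.2 = 0 := by
        rw [← h]; exact Wc_zero D c (Finset.mem_insert_self _ _)
      have hz0' : Wc D c (insert z.2 A) z.1 = 0 := by
        rw [h]; exact Wc_zero D c (Finset.mem_insert_self _ _)
      rw [Prod.fst_swap, Prod.snd_swap, hz0, hz0', mul_zero, mul_zero,
        Finsupp.single_zero, Finsupp.single_zero, add_zero]
    · rw [Prod.fst_swap, Prod.snd_swap,
        show insert z.1 (insert z.2 A) = insert z.2 (insert z.1 A) from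
          Finset.insert_comm _ _ _,
        ← Finsupp.single_add, Wc_swap D c h, Finsupp.single_zero]
  · intro z hf h
    apply hf
    have h12 : z.1 = z.2 := by
      have h2 := congrArg Prod.fst h
      rw [Prod.fst_swap] at h2
      exact h2.symm
    have hz0 : Wc D c (insert z.1 A) z.2 = 0 := by
      rw [← h12]; exact Wc_zero D c (Finset.mem_insert_self _ _)
    rw [hz0, mul_zero, Finsupp.single_zero]
  · intro z; exact Finset.mem_product.mpr ⟨Finset.mem_univ _, Finset.mem_univ _⟩
  · intro z; exact Prod.swap_swap z

theorem CS2sum {A : Finset (Fin q)} {t1 t2 : Fin q} (h12 : t1 ≠ t2)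
    (h1 : t1 ∉ A) (h2 : t2 ∉ A)
    (hLsub : Lset q l ⊆ insert t2 (insert t1 A))
    (hDp : D (pivElt q l hq) ≤ (Lset q l).sup D) :
    Wc D c A t1 • sigCorr k n q l hq D c (insert t1 A) t2
      + Wc D c A t2 • sigCorr k n q l hq D c (insert t2 A) t1 = 0 := by
  rw [sigCorr_eq, sigCorr_eq, Finset.smul_sum, Finset.smul_sum, ← Finset.sum_add_distrib]
  apply Finset.sum_eq_zero
  intro i _
  rw [Finsupp.smul_single, Finsupp.smul_single, smul_eq_mul, smul_eq_mul,
    Finset.insert_comm t1 t2 A, ← Finsupp.single_add]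
  have hg : ((insert (pivElt q l hq) (insert t2 (insert t1 A))) \ {i}).sup D
      ≤ D t1 ⊔ (D t2 ⊔ A.sup D) := by
    have hST : D t2 ⊔ (D t1 ⊔ A.sup D) = D t1 ⊔ (D t2 ⊔ A.sup D) := sup_left_comm (D t2) (D t1) (A.sup D)
    have h4 : (insert t2 (insert t1 A)).sup D = D t1 ⊔ (D t2 ⊔ A.sup D) := by
      rw [Finset.sup_insert, Finset.sup_insert, hST]
    refine le_trans (Finset.sup_mono Finset.sdiff_subset) ?_
    rw [Finset.sup_insert, h4]
    exact sup_le (le_trans hDp (le_trans (Finset.sup_mono hLsub) (le_of_eq h4))) le_rfl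
  rw [CS2coef hq D c h12 h1 h2 hg, Finsupp.single_zero]

theorem kappa_insert_mem {A : Finset (Fin q)} {j : Fin q} (hjL : j ∈ Lset q l) (hjA : j ∉ A) :
    ((insert j A) ∩ Lset q l).card = (A ∩ Lset q l).card + 1 := by
  rw [Finset.insert_inter_of_mem hjL,
    Finset.card_insert_of_notMem (fun h => hjA (Finset.mem_inter.mp h).1)]

theorem kappa_insert_nmem {A : Finset (Fin q)} {j : Fin q} (hjL : j ∉ Lset q l) :
    ((insert j A) ∩ Lset q l).card = (A ∩ Lset q l).card := by
  rw [Finset.insert_inter_of_notMem hjL]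

/-- the deviation of `Ffun` from the "all of `univ`" sum -/
def Xterm (A : Finset (Fin q)) : TotMod k n q :=
  if (A ∩ Lset q l).card = l - 1 then
    -Finsupp.single (insert (tOf q l hq A) A) (Wc D c A (tOf q l hq A)) +
      (if pivElt q l hq ∈ A then 0 else sigCorr k n q l hq D c A (tOf q l hq A))
  else 0

theorem FX (hl : 2 ≤ l) (A : Finset (Fin q)) :
    Ffun hq D c A
      = (∑ j, Finsupp.single (insert j A) (Wc D c A j)) + Xterm hq D c A := by
  by_cases hc : (A ∩ Lset q l).card = l - 1
  · obtain ⟨t, hts⟩ := sdiff_eq_singleton hq hl hc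
    have htOf : tOf q l hq A = t := tOf_eq hq hts
    have htA : t ∉ A := by
      have h0 : t ∈ Lset q l \ A := by rw [hts]; exact Finset.mem_singleton_self t
      exact (Finset.mem_sdiff.mp h0).2
    have hsplit : sigTerm k n q D c A (insert t A)ᶜ
        = (∑ j, Finsupp.single (insert j A) (Wc D c A j))
          - Finsupp.single (insert t A) (Wc D c A t) := by
      rw [sigTerm_eq]
      have h2 : ∑ j ∈ insert t A, Finsupp.single (insert j A) (Wc D c A j)
          = Finsupp.single (insert t A) (Wc D c A t) := by
        rw [Finset.sum_insert htA, Finset.sum_eq_zero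
          (fun j hj => by rw [Wc_zero D c hj, Finsupp.single_zero]), add_zero]
      have h1 := Finset.sum_compl_add_sum (insert t A)
        (fun j => Finsupp.single (insert j A) (Wc D c A j))
      rw [h2] at h1
      exact eq_sub_of_add_eq h1
    unfold Ffun Xterm
    rw [if_neg (not_not_intro hc), if_pos hc, htOf]
    by_cases hp : pivElt q l hq ∈ A
    · rw [if_pos hp, if_pos hp, hsplit]; abel
    · rw [if_neg hp, if_neg hp, hsplit]; abel
  · unfold Ffun Xterm
    rw [if_pos hc, if_neg hc, add_zero, sigTerm_eq]
    apply Finset.sum_subset (Finset.subset_univ _)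
    intro j _ hj
    rw [Wc_zero D c (by simpa using hj), Finsupp.single_zero]

theorem CS4sum (hl : 2 ≤ l) {A : Finset (Fin q)} {t : Fin q}
    (hts : Lset q l \ A = {t}) (hp : pivElt q l hq ∉ A)
    (hDp : D (pivElt q l hq) ≤ (Lset q l).sup D) :
    (∑ j ∈ (insert (pivElt q l hq) (insert t A))ᶜ,
        Wc D c A j • sigCorr k n q l hq D c (insert j A) t)
      + sigmaMap k n q l hq D c (sigCorr k n q l hq D c A t) = 0 := by
  have htL : t ∈ Lset q l := by
    have h0 : t ∈ Lset q l \ A := by rw [hts]; exact Finset.mem_singleton_self t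
    exact (Finset.mem_sdiff.mp h0).1
  have htA : t ∉ A := by
    have h0 : t ∈ Lset q l \ A := by rw [hts]; exact Finset.mem_singleton_self t
    exact (Finset.mem_sdiff.mp h0).2
  have hLsub : Lset q l ⊆ insert t A := by
    intro x hx
    by_cases hxA : x ∈ A
    · exact Finset.mem_insert_of_mem hxA
    · have h0 : x ∈ Lset q l \ A := Finset.mem_sdiff.mpr ⟨hx, hxA⟩
      rw [hts, Finset.mem_singleton] at h0
      rw [h0]
      exact Finset.mem_insert_self _ _
  have hpt : pivElt q l hq ≠ t := fun h => pv_not_mem_L hq (h ▸ htL)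
  have hsecond : sigmaMap k n q l hq D c (sigCorr k n q l hq D c A t)
      = ∑ j ∈ (insert (pivElt q l hq) (insert t A))ᶜ, ∑ i ∈ Lset q l,
          Finsupp.single (insert j ((insert (pivElt q l hq) (insert t A)) \ {i}))
            (Cc hq D c A t i * Wc D c ((insert (pivElt q l hq) (insert t A)) \ {i}) j) := by
    rw [Finset.sum_comm, sigCorr_eq, map_sum]
    refine Finset.sum_congr rfl fun i hiL => ?_
    have hiP : i ∈ insert (pivElt q l hq) (insert t A) :=
      Finset.mem_insert_of_mem (hLsub hiL)
    have hipv : i ≠ pivElt q l hq := fun h => pv_not_mem_L hq (h ▸ hiL)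
    have hinsB : insert i ((insert (pivElt q l hq) (insert t A)) \ {i})
        = insert (pivElt q l hq) (insert t A) := by
      rw [← Finset.erase_eq, Finset.insert_erase hiP]
    have hBL : ((insert (pivElt q l hq) (insert t A)) \ {i}) ∩ Lset q l
        = Lset q l \ {i} := by
      ext x
      simp only [Finset.mem_inter, Finset.mem_sdiff, Finset.mem_singleton]
      constructor
      · rintro ⟨⟨_, hxi⟩, hxL⟩; exact ⟨hxL, hxi⟩
      · rintro ⟨hxL, hxi⟩
        exact ⟨⟨Finset.mem_insert_of_mem (hLsub hxL), hxi⟩, hxL⟩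
    have hκB : (((insert (pivElt q l hq) (insert t A)) \ {i}) ∩ Lset q l).card = l - 1 := by
      rw [hBL, ← Finset.erase_eq, Finset.card_erase_of_mem hiL, card_L hq]
    have hLB : Lset q l \ ((insert (pivElt q l hq) (insert t A)) \ {i}) = {i} := by
      ext x
      simp only [Finset.mem_sdiff, Finset.mem_singleton]
      constructor
      · rintro ⟨hxL, hxB⟩
        by_contra hxi
        exact hxB ⟨Finset.mem_insert_of_mem (hLsub hxL), by simpa using hxi⟩
      · intro hx
        subst hx
        refine ⟨hiL, ?_⟩
        rintro ⟨-, hii⟩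
        exact hii rfl
    have htOfB : tOf q l hq ((insert (pivElt q l hq) (insert t A)) \ {i}) = i :=
      tOf_eq hq hLB
    have hpvB : pivElt q l hq ∈ (insert (pivElt q l hq) (insert t A)) \ {i} :=
      Finset.mem_sdiff.mpr ⟨Finset.mem_insert_self _ _, by simpa using hipv.symm⟩
    rw [sigmaMap_single, FX hq D c hl, smul_add]
    have hXB : Xterm hq D c ((insert (pivElt q l hq) (insert t A)) \ {i})
        = -Finsupp.single (insert (pivElt q l hq) (insert t A))
            (Wc D c ((insert (pivElt q l hq) (insert t A)) \ {i}) i) := by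
      unfold Xterm
      rw [if_pos hκB, htOfB, hinsB, if_pos hpvB, add_zero]
    rw [hXB]
    have hsplit : (∑ j, Finsupp.single (insert j ((insert (pivElt q l hq) (insert t A)) \ {i}))
          (Wc D c ((insert (pivElt q l hq) (insert t A)) \ {i}) j))
        = (∑ j ∈ (insert (pivElt q l hq) (insert t A))ᶜ,
            Finsupp.single (insert j ((insert (pivElt q l hq) (insert t A)) \ {i}))
              (Wc D c ((insert (pivElt q l hq) (insert t A)) \ {i}) j))
          + Finsupp.single (insert (pivElt q l hq) (insert t A))
              (Wc D c ((insert (pivElt q l hq) (insert t A)) \ {i}) i) := by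
      rw [← Finset.sum_compl_add_sum (insert (pivElt q l hq) (insert t A))
        (fun j => Finsupp.single (insert j ((insert (pivElt q l hq) (insert t A)) \ {i}))
          (Wc D c ((insert (pivElt q l hq) (insert t A)) \ {i}) j))]
      congr 1
      rw [Finset.sum_eq_single_of_mem i hiP]
      · rw [hinsB]
      · intro b hb hbi
        rw [Wc_zero D c (Finset.mem_sdiff.mpr ⟨hb, by simpa using hbi⟩), Finsupp.single_zero]
    rw [hsplit, smul_add, Finset.smul_sum]
    simp only [Finsupp.smul_single, smul_eq_mul, smul_neg]
    abel
  have hfirst : (∑ j ∈ (insert (pivElt q l hq) (insert t A))ᶜ,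
        Wc D c A j • sigCorr k n q l hq D c (insert j A) t)
      = ∑ j ∈ (insert (pivElt q l hq) (insert t A))ᶜ, ∑ i ∈ Lset q l,
          Finsupp.single ((insert (pivElt q l hq) (insert t (insert j A))) \ {i})
            (Wc D c A j * Cc hq D c (insert j A) t i) := by
    refine Finset.sum_congr rfl fun j hj => ?_
    rw [sigCorr_eq, Finset.smul_sum]
    refine Finset.sum_congr rfl fun i _ => ?_
    rw [Finsupp.smul_single, smul_eq_mul]
  rw [hfirst, hsecond, ← Finset.sum_add_distrib]
  apply Finset.sum_eq_zero
  intro j hjc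
  rw [← Finset.sum_add_distrib]
  apply Finset.sum_eq_zero
  intro i hiL
  have hjP : j ∉ insert (pivElt q l hq) (insert t A) := Finset.mem_compl.mp hjc
  have hjpv : j ≠ pivElt q l hq := fun h => hjP (h ▸ Finset.mem_insert_self _ _)
  have hjt : j ≠ t := fun h => hjP (by rw [h]; exact Finset.mem_insert_of_mem (Finset.mem_insert_self _ _))
  have hjA : j ∉ A := fun h => hjP (Finset.mem_insert_of_mem (Finset.mem_insert_of_mem h))
  have hjL : j ∉ Lset q l := fun h => hjP (Finset.mem_insert_of_mem (hLsub h))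
  have hjval : l < (j : ℕ) := by
    have h1 : ¬((j : ℕ) < l) := fun h => hjL ((mem_L_iff).mpr h)
    have h2 : (j : ℕ) ≠ l := fun h => hjpv (Fin.ext h)
    omega
  have htj : t < j := by
    rw [Fin.lt_def]
    have := (mem_L_iff).mp htL
    omega
  have hij : i < j := by
    rw [Fin.lt_def]
    have := (mem_L_iff).mp hiL
    omega
  have hpj : pivElt q l hq < j := by
    rw [Fin.lt_def]
    exact hjval
  have hji : j ≠ i := fun h => hjL (h ▸ hiL)
  have hi : i ∈ insert t A := hLsub hiL
  have hbb : ((insert (pivElt q l hq) (insert t A)) \ {i}).sup D ≤ D t ⊔ A.sup D := by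
    refine le_trans (Finset.sup_mono Finset.sdiff_subset) ?_
    rw [Finset.sup_insert]
    refine sup_le (le_trans hDp (le_trans (Finset.sup_mono hLsub)
      (le_of_eq Finset.sup_insert))) (le_of_eq Finset.sup_insert)
  have hsetj : insert j ((insert (pivElt q l hq) (insert t A)) \ {i})
      = (insert (pivElt q l hq) (insert t (insert j A))) \ {i} := by
    ext x
    constructor
    · intro hx
      rcases Finset.mem_insert.mp hx with rfl | hx2
      · refine Finset.mem_sdiff.mpr ⟨?_, by simpa using hji⟩
        exact Finset.mem_insert_of_mem (Finset.mem_insert_of_mem (Finset.mem_insert_self _ _))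
      · obtain ⟨hxP, hxi⟩ := Finset.mem_sdiff.mp hx2
        refine Finset.mem_sdiff.mpr ⟨?_, hxi⟩
        rcases Finset.mem_insert.mp hxP with rfl | hxP2
        · exact Finset.mem_insert_self _ _
        · rcases Finset.mem_insert.mp hxP2 with rfl | hxP3
          · exact Finset.mem_insert_of_mem (Finset.mem_insert_self _ _)
          · exact Finset.mem_insert_of_mem
              (Finset.mem_insert_of_mem (Finset.mem_insert_of_mem hxP3))
    · intro hx
      obtain ⟨hxP, hxi⟩ := Finset.mem_sdiff.mp hx
      rcases Finset.mem_insert.mp hxP with rfl | hxP2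
      · exact Finset.mem_insert_of_mem
          (Finset.mem_sdiff.mpr ⟨Finset.mem_insert_self _ _, hxi⟩)
      rcases Finset.mem_insert.mp hxP2 with rfl | hxP3
      · exact Finset.mem_insert_of_mem
          (Finset.mem_sdiff.mpr ⟨Finset.mem_insert_of_mem (Finset.mem_insert_self _ _), hxi⟩)
      rcases Finset.mem_insert.mp hxP3 with rfl | hxP4
      · exact Finset.mem_insert_self _ _
      · exact Finset.mem_insert_of_mem
          (Finset.mem_sdiff.mpr ⟨Finset.mem_insert_of_mem (Finset.mem_insert_of_mem hxP4), hxi⟩)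
  rw [hsetj, ← Finsupp.single_add,
    CS4coef hq D c htA hjA hp hpt hi htj hij hpj hbb hsetj, Finsupp.single_zero]

set_option maxHeartbeats 2000000 in
theorem sigma_Ffun (hl : 2 ≤ l) (hDp : D (pivElt q l hq) ≤ (Lset q l).sup D)
    {A : Finset (Fin q)} (hA : ¬ Lset q l ⊆ A) :
    sigmaMap k n q l hq D c (Ffun hq D c A) = 0 := by
  have step1 : ∀ j : Fin q,
      sigmaMap k n q l hq D c (Finsupp.single (insert j A) (Wc D c A j))
      = (∑ j' : Fin q, Finsupp.single (insert j' (insert j A))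
            (Wc D c A j * Wc D c (insert j A) j'))
        + Wc D c A j • Xterm hq D c (insert j A) := by
    intro j
    rw [sigmaMap_single, FX hq D c hl, smul_add, Finset.smul_sum]
    congr 1
    refine Finset.sum_congr rfl fun j' _ => ?_
    rw [Finsupp.smul_single, smul_eq_mul]
  rw [FX hq D c hl A, map_add, map_sum,
    Finset.sum_congr rfl (fun j _ => step1 j), Finset.sum_add_distrib,
    DoubleZero D c A, zero_add]
  by_cases hκ1 : (A ∩ Lset q l).card = l - 1
  · -- main case κ = l - 1
    obtain ⟨t, hts⟩ := sdiff_eq_singleton hq hl hκ1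
    have htOf : tOf q l hq A = t := tOf_eq hq hts
    have htL : t ∈ Lset q l := by
      have h0 : t ∈ Lset q l \ A := by rw [hts]; exact Finset.mem_singleton_self t
      exact (Finset.mem_sdiff.mp h0).1
    have htA : t ∉ A := by
      have h0 : t ∈ Lset q l \ A := by rw [hts]; exact Finset.mem_singleton_self t
      exact (Finset.mem_sdiff.mp h0).2
    have hκt : ((insert t A) ∩ Lset q l).card ≠ l - 1 := by
      rw [kappa_insert_mem htL htA, hκ1]; omega
    have hXtA : Xterm hq D c (insert t A) = 0 := by
      unfold Xterm; rw [if_neg hκt]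
    have hFt : Ffun hq D c (insert t A)
        = ∑ j' : Fin q, Finsupp.single (insert j' (insert t A)) (Wc D c (insert t A) j') := by
      rw [FX hq D c hl, hXtA, add_zero]
    have hXj : ∀ j : Fin q, Wc D c A j • Xterm hq D c (insert j A)
        = -Finsupp.single (insert t (insert j A)) (Wc D c A j * Wc D c (insert j A) t)
          + (if pivElt q l hq ∈ A then 0
             else if j ∈ (insert (pivElt q l hq) (insert t A))ᶜ then
               Wc D c A j • sigCorr k n q l hq D c (insert j A) t
             else 0) := by
      intro j
      by_cases hjA : j ∈ A
      · have hjP : j ∉ (insert (pivElt q l hq) (insert t A))ᶜ := by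
          simp only [Finset.mem_compl, not_not]
          exact Finset.mem_insert_of_mem (Finset.mem_insert_of_mem hjA)
        rw [Wc_zero D c hjA, zero_smul, zero_mul, Finsupp.single_zero, neg_zero, zero_add,
          if_neg hjP, ite_self]
      · by_cases hjt : j = t
        · subst hjt
          have h1 : j ∉ (insert (pivElt q l hq) (insert j A))ᶜ := by
            simp only [Finset.mem_compl, not_not]
            exact Finset.mem_insert_of_mem (Finset.mem_insert_self _ _)
          rw [hXtA, smul_zero, Wc_zero D c (Finset.mem_insert_self j A), mul_zero,
            Finsupp.single_zero, neg_zero, zero_add, if_neg h1, ite_self]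
        · have hjL : j ∉ Lset q l := by
            intro h
            have h0 : j ∈ Lset q l \ A := Finset.mem_sdiff.mpr ⟨h, hjA⟩
            rw [hts, Finset.mem_singleton] at h0
            exact hjt h0
          have hκj : ((insert j A) ∩ Lset q l).card = l - 1 := by
            rw [kappa_insert_nmem hjL, hκ1]
          have hLsj : Lset q l \ (insert j A) = {t} := by
            ext x
            simp only [Finset.mem_sdiff, Finset.mem_insert, Finset.mem_singleton, not_or]
            constructor
            · rintro ⟨hxL, -, hxA⟩
              have h0 : x ∈ Lset q l \ A := Finset.mem_sdiff.mpr ⟨hxL, hxA⟩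
              rw [hts, Finset.mem_singleton] at h0
              exact h0
            · rintro rfl
              exact ⟨htL, fun h => hjt h.symm, htA⟩
          have htOfj : tOf q l hq (insert j A) = t := tOf_eq hq hLsj
          by_cases hjp : j = pivElt q l hq
          · have hpvin : pivElt q l hq ∈ insert j A := by
              rw [← hjp]; exact Finset.mem_insert_self _ _
            have hXp : Xterm hq D c (insert j A)
                = -Finsupp.single (insert t (insert j A)) (Wc D c (insert j A) t) := by
              unfold Xterm
              rw [if_pos hκj, htOfj, if_pos hpvin, add_zero]
            have h1 : j ∉ (insert (pivElt q l hq) (insert t A))ᶜ := by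
              simp only [Finset.mem_compl, not_not, hjp]
              exact Finset.mem_insert_self _ _
            have hpA : pivElt q l hq ∉ A := by rw [← hjp]; exact hjA
            rw [hXp, smul_neg, Finsupp.smul_single, smul_eq_mul, if_neg hpA, if_neg h1, add_zero]
          · have hjP : j ∈ (insert (pivElt q l hq) (insert t A))ᶜ := by
              simp only [Finset.mem_compl, Finset.mem_insert, not_or]
              exact ⟨hjp, hjt, hjA⟩
            have hXg : Xterm hq D c (insert j A)
                = -Finsupp.single (insert t (insert j A)) (Wc D c (insert j A) t)
                  + (if pivElt q l hq ∈ A then 0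
                     else sigCorr k n q l hq D c (insert j A) t) := by
              unfold Xterm
              rw [if_pos hκj, htOfj]
              congr 1
              by_cases hpA : pivElt q l hq ∈ A
              · rw [if_pos (Finset.mem_insert_of_mem hpA), if_pos hpA]
              · rw [if_neg (by
                    simp only [Finset.mem_insert, not_or]
                    exact ⟨fun h => hjp h.symm, hpA⟩), if_neg hpA]
            rw [hXg, smul_add, smul_neg, Finsupp.smul_single, smul_eq_mul]
            congr 1
            by_cases hpA : pivElt q l hq ∈ A
            · rw [if_pos hpA, if_pos hpA, smul_zero]
            · rw [if_neg hpA, if_neg hpA, if_pos hjP]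
    rw [Finset.sum_congr rfl (fun j _ => hXj j), Finset.sum_add_distrib]
    have hXA : Xterm hq D c A
        = -Finsupp.single (insert t A) (Wc D c A t)
          + (if pivElt q l hq ∈ A then 0 else sigCorr k n q l hq D c A t) := by
      unfold Xterm; rw [if_pos hκ1, htOf]
    have hcomb : (∑ j : Fin q,
          -Finsupp.single (insert t (insert j A)) (Wc D c A j * Wc D c (insert j A) t))
        + -(Wc D c A t • ∑ j' : Fin q,
            Finsupp.single (insert j' (insert t A)) (Wc D c (insert t A) j')) = 0 := by
      rw [Finset.smul_sum, ← Finset.sum_neg_distrib, ← Finset.sum_add_distrib]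
      apply Finset.sum_eq_zero
      intro j _
      rw [Finsupp.smul_single, smul_eq_mul,
        show insert j (insert t A) = insert t (insert j A) from Finset.insert_comm _ _ _,
        ← neg_add, ← Finsupp.single_add]
      by_cases hjt : j = t
      · subst hjt
        rw [Wc_zero D c (Finset.mem_insert_self j A)]
        simp
      · rw [Wc_swap D c hjt, Finsupp.single_zero, neg_zero]
    by_cases hpA : pivElt q l hq ∈ A
    · simp only [if_pos hpA]
      rw [Finset.sum_const_zero, add_zero, hXA, if_pos hpA, add_zero, map_neg,
        sigmaMap_single, hFt]
      exact hcomb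
    · simp only [if_neg hpA]
      rw [Finset.sum_ite_mem, Finset.univ_inter, hXA, if_neg hpA, map_add, map_neg,
        sigmaMap_single, hFt]
      have h2 := CS4sum hq D c hl hts hpA hDp
      have hre : ((∑ j : Fin q,
            -Finsupp.single (insert t (insert j A)) (Wc D c A j * Wc D c (insert j A) t))
          + ∑ j ∈ (insert (pivElt q l hq) (insert t A))ᶜ,
              Wc D c A j • sigCorr k n q l hq D c (insert j A) t)
          + (-(Wc D c A t • ∑ j' : Fin q,
              Finsupp.single (insert j' (insert t A)) (Wc D c (insert t A) j'))
            + sigmaMap k n q l hq D c (sigCorr k n q l hq D c A t))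
          = ((∑ j : Fin q,
            -Finsupp.single (insert t (insert j A)) (Wc D c A j * Wc D c (insert j A) t))
          + -(Wc D c A t • ∑ j' : Fin q,
              Finsupp.single (insert j' (insert t A)) (Wc D c (insert t A) j')))
          + ((∑ j ∈ (insert (pivElt q l hq) (insert t A))ᶜ,
              Wc D c A j • sigCorr k n q l hq D c (insert j A) t)
            + sigmaMap k n q l hq D c (sigCorr k n q l hq D c A t)) := by
        abel
      rw [hre, hcomb, h2, add_zero]
  · -- κ ≠ l - 1
    have hXA : Xterm hq D c A = 0 := by unfold Xterm; rw [if_neg hκ1]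
    rw [hXA, map_zero, add_zero]
    by_cases hκ2 : (A ∩ Lset q l).card + 1 = l - 1
    · -- κ = l - 2
      have hcard2 : (Lset q l \ A).card = 2 := by
        have := sdiff_card' hq A; omega
      obtain ⟨t1, t2, h12, hts⟩ := Finset.card_eq_two.mp hcard2
      have ht1 : t1 ∈ Lset q l \ A := by rw [hts]; exact Finset.mem_insert_self _ _
      have ht2 : t2 ∈ Lset q l \ A := by
        rw [hts]; exact Finset.mem_insert_of_mem (Finset.mem_singleton_self _)
      have ht1L : t1 ∈ Lset q l := (Finset.mem_sdiff.mp ht1).1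
      have ht1A : t1 ∉ A := (Finset.mem_sdiff.mp ht1).2
      have ht2L : t2 ∈ Lset q l := (Finset.mem_sdiff.mp ht2).1
      have ht2A : t2 ∉ A := (Finset.mem_sdiff.mp ht2).2
      have hLsub2 : Lset q l ⊆ insert t2 (insert t1 A) := by
        intro x hx
        by_cases hxA : x ∈ A
        · exact Finset.mem_insert_of_mem (Finset.mem_insert_of_mem hxA)
        · have h0 : x ∈ Lset q l \ A := Finset.mem_sdiff.mpr ⟨hx, hxA⟩
          rw [hts] at h0
          rcases Finset.mem_insert.mp h0 with rfl | h0
          · exact Finset.mem_insert_of_mem (Finset.mem_insert_self _ _)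
          · rw [Finset.mem_singleton.mp h0]
            exact Finset.mem_insert_self _ _
      rw [show (∑ j : Fin q, Wc D c A j • Xterm hq D c (insert j A))
          = ∑ j ∈ ({t1, t2} : Finset (Fin q)), Wc D c A j • Xterm hq D c (insert j A) from
        (Finset.sum_subset (Finset.subset_univ _) (by
          intro j _ hj
          simp only [Finset.mem_insert, Finset.mem_singleton, not_or] at hj
          by_cases hjA : j ∈ A
          · rw [Finset.insert_eq_self.mpr hjA, hXA, smul_zero]
          · have hjL : j ∉ Lset q l := by
              intro hjL
              have h0 : j ∈ Lset q l \ A := Finset.mem_sdiff.mpr ⟨hjL, hjA⟩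
              rw [hts] at h0
              rcases Finset.mem_insert.mp h0 with h1 | h1
              · exact hj.1 h1
              · exact hj.2 (Finset.mem_singleton.mp h1)
            have hXz : Xterm hq D c (insert j A) = 0 := by
              unfold Xterm
              rw [if_neg (by rw [kappa_insert_nmem hjL]; exact hκ1)]
            rw [hXz, smul_zero])).symm]
      rw [Finset.sum_pair h12]
      -- facts for t1/t2
      have hκt1 : ((insert t1 A) ∩ Lset q l).card = l - 1 := by
        rw [kappa_insert_mem ht1L ht1A]; omega
      have hκt2 : ((insert t2 A) ∩ Lset q l).card = l - 1 := by
        rw [kappa_insert_mem ht2L ht2A]; omega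
      have hLs1 : Lset q l \ (insert t1 A) = {t2} := by
        ext x
        simp only [Finset.mem_sdiff, Finset.mem_insert, Finset.mem_singleton, not_or]
        constructor
        · rintro ⟨hxL, hxt1, hxA⟩
          have h0 : x ∈ Lset q l \ A := Finset.mem_sdiff.mpr ⟨hxL, hxA⟩
          rw [hts] at h0
          rcases Finset.mem_insert.mp h0 with h1 | h1
          · exact absurd h1 hxt1
          · exact Finset.mem_singleton.mp h1
        · rintro rfl
          exact ⟨ht2L, fun h => h12 h.symm, ht2A⟩
      have hLs2 : Lset q l \ (insert t2 A) = {t1} := by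
        ext x
        simp only [Finset.mem_sdiff, Finset.mem_insert, Finset.mem_singleton, not_or]
        constructor
        · rintro ⟨hxL, hxt2, hxA⟩
          have h0 : x ∈ Lset q l \ A := Finset.mem_sdiff.mpr ⟨hxL, hxA⟩
          rw [hts] at h0
          rcases Finset.mem_insert.mp h0 with h1 | h1
          · exact h1
          · exact absurd (Finset.mem_singleton.mp h1) hxt2
        · rintro rfl
          exact ⟨ht1L, h12, ht1A⟩
      have htOf1 : tOf q l hq (insert t1 A) = t2 := tOf_eq hq hLs1
      have htOf2 : tOf q l hq (insert t2 A) = t1 := tOf_eq hq hLs2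
      have hpvt1 : pivElt q l hq ≠ t1 := fun h => pv_not_mem_L hq (h ▸ ht1L)
      have hpvt2 : pivElt q l hq ≠ t2 := fun h => pv_not_mem_L hq (h ▸ ht2L)
      have hsingle : Finsupp.single (insert t2 (insert t1 A))
            (Wc D c A t1 * Wc D c (insert t1 A) t2)
          + Finsupp.single (insert t2 (insert t1 A))
            (Wc D c A t2 * Wc D c (insert t2 A) t1) = 0 := by
        rw [← Finsupp.single_add, Wc_swap D c h12, Finsupp.single_zero]
      by_cases hpA : pivElt q l hq ∈ A
      · have hX1 : Xterm hq D c (insert t1 A)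
            = -Finsupp.single (insert t2 (insert t1 A)) (Wc D c (insert t1 A) t2) := by
          unfold Xterm
          rw [if_pos hκt1, htOf1, if_pos (Finset.mem_insert_of_mem hpA), add_zero]
        have hX2 : Xterm hq D c (insert t2 A)
            = -Finsupp.single (insert t1 (insert t2 A)) (Wc D c (insert t2 A) t1) := by
          unfold Xterm
          rw [if_pos hκt2, htOf2, if_pos (Finset.mem_insert_of_mem hpA), add_zero]
        rw [hX1, hX2, smul_neg, smul_neg, Finsupp.smul_single, Finsupp.smul_single,
          smul_eq_mul, smul_eq_mul,
          show insert t1 (insert t2 A) = insert t2 (insert t1 A) from Finset.insert_comm _ _ _,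
          ← neg_add, ← Finsupp.single_add, Wc_swap D c h12, Finsupp.single_zero, neg_zero]
      · have hX1 : Xterm hq D c (insert t1 A)
            = -Finsupp.single (insert t2 (insert t1 A)) (Wc D c (insert t1 A) t2)
              + sigCorr k n q l hq D c (insert t1 A) t2 := by
          unfold Xterm
          rw [if_pos hκt1, htOf1, if_neg (by
            simp only [Finset.mem_insert, not_or]
            exact ⟨hpvt1, hpA⟩)]
        have hX2 : Xterm hq D c (insert t2 A)
            = -Finsupp.single (insert t1 (insert t2 A)) (Wc D c (insert t2 A) t1)
              + sigCorr k n q l hq D c (insert t2 A) t1 := by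
          unfold Xterm
          rw [if_pos hκt2, htOf2, if_neg (by
            simp only [Finset.mem_insert, not_or]
            exact ⟨hpvt2, hpA⟩)]
        rw [hX1, hX2, smul_add, smul_add, smul_neg, smul_neg, Finsupp.smul_single,
          Finsupp.smul_single, smul_eq_mul, smul_eq_mul,
          show insert t1 (insert t2 A) = insert t2 (insert t1 A) from Finset.insert_comm _ _ _]
        have hcorr := CS2sum hq D c h12 ht1A ht2A hLsub2 hDp
        have hre : (-Finsupp.single (insert t2 (insert t1 A))
              (Wc D c A t1 * Wc D c (insert t1 A) t2)
            + Wc D c A t1 • sigCorr k n q l hq D c (insert t1 A) t2)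
            + (-Finsupp.single (insert t2 (insert t1 A))
              (Wc D c A t2 * Wc D c (insert t2 A) t1)
            + Wc D c A t2 • sigCorr k n q l hq D c (insert t2 A) t1)
            = -(Finsupp.single (insert t2 (insert t1 A))
                (Wc D c A t1 * Wc D c (insert t1 A) t2)
              + Finsupp.single (insert t2 (insert t1 A))
                (Wc D c A t2 * Wc D c (insert t2 A) t1))
              + (Wc D c A t1 • sigCorr k n q l hq D c (insert t1 A) t2
                + Wc D c A t2 • sigCorr k n q l hq D c (insert t2 A) t1) := by
          abel
        rw [hre, hsingle, hcorr, neg_zero, add_zero]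
    · -- κ ∉ {l-1, l-2}: everything vanishes
      apply Finset.sum_eq_zero
      intro j _
      by_cases hjA : j ∈ A
      · rw [Finset.insert_eq_self.mpr hjA, hXA, smul_zero]
      · by_cases hjL : j ∈ Lset q l
        · have hXz : Xterm hq D c (insert j A) = 0 := by
            unfold Xterm
            rw [if_neg (by rw [kappa_insert_mem hjL hjA]; exact hκ2)]
          rw [hXz, smul_zero]
        · have hXz : Xterm hq D c (insert j A) = 0 := by
            unfold Xterm
            rw [if_neg (by rw [kappa_insert_nmem hjL]; exact hκ1)]
          rw [hXz, smul_zero]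

end Main
end AuxMain

end

/-- **The homotopies square to zero.**
For any `s ∈ [r]`, the composite `σ_{e_s} ∘ σ_{e_s}` is identically zero on the
pivot resolution `T_{1,…,l}`. -/
theorem sigma_sq_zero {k : Type*} [Field k] {n q l : ℕ}
    (hl : 2 ≤ l) (hq : l < q)
    (D : Fin q → (Fin n →₀ ℕ))
    (hne : ∀ i : Fin q, D i ≠ 0)
    (hmin : ∀ i j : Fin q, i ≠ j → ¬ lcmMono k n q D {i} ∣ lcmMono k n q D {j})
    (hgap : lcmMono k n q D {pivElt q l hq} ∣ lcmMono k n q D (Lset q l))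
    (r : ℕ) (a : Fin r → Fin q → MvPolynomial (Fin n) k)
    (s : Fin r) :
    ∀ x ∈ subcx k n q (pivotΩ (Lset q l)),
      sigmaMap k n q l hq D (a s) (sigmaMap k n q l hq D (a s) x) = 0 := by
  intro x hx
  have hDp := AuxMain.gap_le hq D hgap
  rw [← Finsupp.sum_single x, Finsupp.sum, map_sum, map_sum]
  apply Finset.sum_eq_zero
  intro A hA
  have hApiv : ¬ Lset q l ⊆ A := (Finsupp.mem_supported _ x).mp hx hA
  rw [AuxMain.sigmaMap_single, map_smul,
    AuxMain.sigma_Ffun hq D (a s) hl hDp hApiv, smul_zero]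
end

section
/- For any s ∈ [r] and any subset A ⊆ [q] with A ⊉ [l] such that [l] ∖ A = {t} is a singleton and l+1 ∈ A, one has (∂σ_{e_s} + σ_{e_s}∂)(ε_A) = a_s ε_A in the pivot resolution T_{1,…,l}. -/
open MvPolynomial Finset

section SignLemmas
variable {α : Type*} [LinearOrder α] [DecidableEq α]

lemma fsign_eq {j : α} {B : Finset α} (h : j ∉ B) :
    fsign {j} B = (-1 : ℤ) ^ (B.filter (· < j)).card := by
  rw [fsign, if_pos (by simp [Finset.singleton_inter_of_notMem h])]
  congr 1
  rw [Finset.singleton_product, Finset.filter_map, Finset.card_map]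
  rfl

lemma card_filter_insert_lt {i j : α} {A : Finset α} (hi : i ∈ A) :
    (A.filter (· < j)).card
      = ((A \ {i}).filter (· < j)).card + (if i < j then 1 else 0) := by
  have h : A = insert i (A \ {i}) := by
    ext x; simp; rcases eq_or_ne x i with h|h <;> simp [h, hi]
  conv_lhs => rw [h, Finset.filter_insert]
  split
  · rw [Finset.card_insert_of_notMem (by simp)]
  · simp

lemma insert_sdiff_single {i j : α} {A : Finset α} (hij : j ≠ i) :
    (insert j A) \ {i} = insert j (A \ {i}) := by
  ext x
  simp only [Finset.mem_sdiff, Finset.mem_insert, Finset.mem_singleton]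
  rcases eq_or_ne x j with rfl|h
  · simp [hij]
  · tauto

lemma fsign_pair {i j : α} {A : Finset α} (hi : i ∈ A) (hj : j ∉ A) (hij : i ≠ j) :
    (fsign {j} A) * (fsign {i} ((insert j A) \ {i}))
      = -((fsign {i} (A \ {i})) * (fsign {j} (A \ {i}))) := by
  have hins : (insert j A) \ {i} = insert j (A \ {i}) := insert_sdiff_single (Ne.symm hij)
  have hiA : i ∉ (insert j A) \ {i} := by simp
  have hjdi : j ∉ A \ {i} := by simp [hj]
  have hidi : i ∉ A \ {i} := by simp
  rw [fsign_eq hj, fsign_eq hiA, fsign_eq hidi, fsign_eq hjdi]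
  have h1 : (A.filter (· < j)).card
      = ((A \ {i}).filter (· < j)).card + (if i < j then 1 else 0) :=
    card_filter_insert_lt hi
  have h2 : (((insert j A) \ {i}).filter (· < i)).card
      = ((A \ {i}).filter (· < i)).card + (if j < i then 1 else 0) := by
    rw [hins, Finset.filter_insert]
    split
    · rw [Finset.card_insert_of_notMem (by simp [hj])]
    · simp
  rw [h1, h2]
  have h3 : (if i < j then 1 else 0) + (if j < i then 1 else 0) = 1 := by
    rcases lt_or_gt_of_ne hij with h|h <;> simp [h, asymm h]
  rw [← pow_add, ← pow_add]
  have hexp : (((A \ {i}).filter (· < j)).card) + (if i < j then 1 else 0) +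
      (((A \ {i}).filter (· < i)).card + (if j < i then 1 else 0))
      = ((A \ {i}).filter (· < i)).card + ((A \ {i}).filter (· < j)).card + 1 := by omega
  rw [hexp, pow_succ, pow_add]
  ring

lemma fsign_sdiff_larger {x y : α} {B : Finset α} (hx : x ∉ B) (hxy : x < y) :
    fsign {x} (B \ {y}) = fsign {x} B := by
  rw [fsign_eq (by simp [hx]), fsign_eq hx]
  congr 2
  ext b; simp only [Finset.mem_filter, Finset.mem_sdiff, Finset.mem_singleton]
  constructor
  · tauto
  · rintro ⟨hb, hbx⟩; exact ⟨⟨hb, fun h => absurd (h ▸ hbx) (asymm hxy)⟩, hbx⟩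

lemma fsign_sq {j : α} {B : Finset α} (h : j ∉ B) : fsign {j} B * fsign {j} B = 1 := by
  rw [fsign_eq h, ← pow_add, ← two_mul, pow_mul]; norm_num

end SignLemmas

section ArithLemmas
variable {k : Type*} [Field k] {n q : ℕ}

lemma tsub_aux (x y z w : Fin n →₀ ℕ) (h1 : y ≤ x) (h2 : w ≤ z + y) :
    (x - y) + (z + y - w) = z + x - w := by
  ext a
  have h1' := Finsupp.le_def.mp h1 a
  have h2' := Finsupp.le_def.mp h2 a
  simp only [Finsupp.add_apply, Finsupp.tsub_apply] at *
  omega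

lemma sup_insert_le (D : Fin q → (Fin n →₀ ℕ)) (j : Fin q) (B : Finset (Fin q)) :
    (insert j B).sup D ≤ D j + B.sup D := by
  rw [Finset.sup_insert]
  exact sup_le le_self_add le_add_self

lemma tsub_comp1 (D : Fin q → (Fin n →₀ ℕ)) (j : Fin q) (B C : Finset (Fin q))
    (hBC : C ⊆ insert j B) :
    (D j + B.sup D - (insert j B).sup D) + ((insert j B).sup D - C.sup D)
      = D j + B.sup D - C.sup D :=
  tsub_add_tsub_cancel (sup_insert_le D j B) (Finset.sup_mono hBC)

lemma mono_mul (u v : Fin n →₀ ℕ) :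
    (monomial u (1:k)) * monomial v (1:k) = monomial (u+v) (1:k) := by
  rw [monomial_mul, one_mul]

lemma coeff_comb (s1 s2 : ℤ) (x : MvPolynomial (Fin n) k) (u v : Fin n →₀ ℕ) :
    ((s1 : MvPolynomial (Fin n) k) * x * monomial u 1) *
      ((s2 : MvPolynomial (Fin n) k) * monomial v 1)
      = (((s1*s2 : ℤ) : MvPolynomial (Fin n) k)) * x * monomial (u+v) 1 := by
  have h : (((s1*s2 : ℤ) : MvPolynomial (Fin n) k)) * x * monomial (u+v) 1
      = ((s1 : MvPolynomial (Fin n) k) * (s2 : MvPolynomial (Fin n) k)) * x *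
        (monomial u 1 * monomial v 1) := by
    rw [mono_mul]; push_cast; ring
  rw [h]; ring

lemma coeff_comb2 (s1 s2 : ℤ) (x : MvPolynomial (Fin n) k) (u v : Fin n →₀ ℕ) :
    ((s1 : MvPolynomial (Fin n) k) * monomial u 1) *
      ((s2 : MvPolynomial (Fin n) k) * x * monomial v 1)
      = (((s1*s2 : ℤ) : MvPolynomial (Fin n) k)) * x * monomial (u+v) 1 := by
  have h : (((s1*s2 : ℤ) : MvPolynomial (Fin n) k)) * x * monomial (u+v) 1
      = ((s1 : MvPolynomial (Fin n) k) * (s2 : MvPolynomial (Fin n) k)) * x *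
        (monomial u 1 * monomial v 1) := by
    rw [mono_mul]; push_cast; ring
  rw [h]; ring

end ArithLemmas

section MainLemmas

variable {k : Type*} [Field k] {n q l : ℕ}

/-- Canonical pair term. -/
noncomputable def Qt (D : Fin q → (Fin n →₀ ℕ)) (c : Fin q → MvPolynomial (Fin n) k)
    (A : Finset (Fin q)) (sg : ℤ) (j i : Fin q) : TotMod k n q :=
  Finsupp.single ((insert j A) \ {i})
    ((sg : MvPolynomial (Fin n) k) * c j *
      monomial (D j + A.sup D - ((insert j A) \ {i}).sup D) (1:k))

/-- Canonical diagonal term. -/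
noncomputable def Et (D : Fin q → (Fin n →₀ ℕ)) (c : Fin q → MvPolynomial (Fin n) k)
    (A : Finset (Fin q)) (j : Fin q) : TotMod k n q :=
  Finsupp.single A (c j * monomial (D j) (1:k))

lemma taylorD_single (D : Fin q → (Fin n →₀ ℕ)) (τ : Finset (Fin q))
    (C : MvPolynomial (Fin n) k) :
    taylorD k n q D (Finsupp.single τ C) =
      ∑ j ∈ τ, Finsupp.single (τ \ {j})
        (C * ((fsign {j} (τ \ {j}) : MvPolynomial (Fin n) k) *
          monomial (τ.sup D - (τ \ {j}).sup D) (1:k))) := by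
  rw [taylorD, Finsupp.linearCombination_single, Finset.smul_sum]
  refine Finset.sum_congr rfl fun j hj => ?_
  rw [Finsupp.smul_single, smul_eq_mul]

lemma smul_sigTerm (D : Fin q → (Fin n →₀ ℕ)) (c : Fin q → MvPolynomial (Fin n) k)
    (B J : Finset (Fin q)) (x : MvPolynomial (Fin n) k) :
    x • sigTerm k n q D c B J =
      ∑ j ∈ J, Finsupp.single (insert j B)
        (x * ((fsign {j} B : MvPolynomial (Fin n) k) * c j *
          monomial (D j + B.sup D - (insert j B).sup D) (1:k))) := by
  rw [sigTerm, Finset.smul_sum]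
  refine Finset.sum_congr rfl fun j hj => ?_
  rw [Finsupp.smul_single, smul_eq_mul]

/-- per-term transform for the `σ∂` side. -/
lemma sig_term_eq (D : Fin q → (Fin n →₀ ℕ)) (c : Fin q → MvPolynomial (Fin n) k)
    (A : Finset (Fin q)) (i j : Fin q) (hi : i ∈ A) (hij : j ≠ i) :
    Finsupp.single (insert j (A \ {i}))
      (((fsign {i} (A \ {i}) : MvPolynomial (Fin n) k) *
          monomial (A.sup D - (A \ {i}).sup D) (1:k)) *
        ((fsign {j} (A \ {i}) : MvPolynomial (Fin n) k) * c j *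
          monomial (D j + (A \ {i}).sup D - (insert j (A \ {i})).sup D) (1:k)))
      = Qt D c A (fsign {i} (A \ {i}) * fsign {j} (A \ {i})) j i := by
  have hidx : (insert j A) \ {i} = insert j (A \ {i}) := insert_sdiff_single hij
  rw [Qt, hidx, coeff_comb2, tsub_aux _ _ _ _ (Finset.sup_mono Finset.sdiff_subset)
    (sup_insert_le D j (A \ {i}))]

/-- diagonal transform for the `σ∂` side. -/
lemma sig_diag_eq (D : Fin q → (Fin n →₀ ℕ)) (c : Fin q → MvPolynomial (Fin n) k)
    (A : Finset (Fin q)) (i : Fin q) (hi : i ∈ A) :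
    Finsupp.single (insert i (A \ {i}))
      (((fsign {i} (A \ {i}) : MvPolynomial (Fin n) k) *
          monomial (A.sup D - (A \ {i}).sup D) (1:k)) *
        ((fsign {i} (A \ {i}) : MvPolynomial (Fin n) k) * c i *
          monomial (D i + (A \ {i}).sup D - (insert i (A \ {i})).sup D) (1:k)))
      = Et D c A i := by
  have hidx : insert i (A \ {i}) = A := by
    rw [← Finset.erase_eq, Finset.insert_erase hi]
  rw [Et, hidx, coeff_comb2, fsign_sq (by simp : i ∉ A \ {i})]
  have hexp : (A.sup D - (A \ {i}).sup D) + (D i + (A \ {i}).sup D - A.sup D) = D i := by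
    have h := tsub_aux (A.sup D) ((A \ {i}).sup D) (D i) (A.sup D)
      (Finset.sup_mono Finset.sdiff_subset)
      (by have h2 := sup_insert_le D i (A \ {i}); rwa [hidx] at h2)
    rw [h, add_tsub_cancel_right]
  rw [hexp]
  push_cast
  ring

/-- pair cancellation. -/
lemma Q_cancel (D : Fin q → (Fin n →₀ ℕ)) (c : Fin q → MvPolynomial (Fin n) k)
    (A : Finset (Fin q)) (i j : Fin q) (hi : i ∈ A) (hj : j ∉ A) (hij : i ≠ j) :
    Qt D c A (fsign {j} A * fsign {i} ((insert j A) \ {i})) j i +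
      Qt D c A (fsign {i} (A \ {i}) * fsign {j} (A \ {i})) j i = 0 := by
  rw [Qt, Qt, ← Finsupp.single_add, fsign_pair hi hj hij]
  rw [Finsupp.single_eq_zero]
  push_cast
  ring

lemma mem_Lset {x : Fin q} : x ∈ Lset q l ↔ (x : ℕ) < l := by simp [Lset]

lemma pivElt_not_Lset (hq : l < q) : pivElt q l hq ∉ Lset q l := by
  simp [Lset, pivElt]

lemma card_Lset (hq : l < q) : (Lset q l).card = l := by
  have h : Lset q l = Finset.Iio (⟨l, hq⟩ : Fin q) := by
    ext x; simp [Lset, Fin.lt_def]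
  rw [h, Fin.card_Iio]

section WithA
variable {A : Finset (Fin q)} {t : Fin q}

lemma mem_L_iff (hA : Lset q l \ A = {t}) (x : Fin q) :
    (x ∈ Lset q l ∧ x ∉ A) ↔ x = t := by
  rw [← Finset.mem_sdiff, hA, Finset.mem_singleton]

lemma htA (hA : Lset q l \ A = {t}) : t ∉ A :=
  (((mem_L_iff hA t).mpr rfl)).2

lemma htL (hA : Lset q l \ A = {t}) : t ∈ Lset q l :=
  (((mem_L_iff hA t).mpr rfl)).1

lemma card_AL (hq : l < q) (hA : Lset q l \ A = {t}) : (A ∩ Lset q l).card = l - 1 := by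
  have hset : A ∩ Lset q l = Lset q l \ {t} := by
    ext x
    have h := mem_L_iff hA x
    simp only [Finset.mem_inter, Finset.mem_sdiff, Finset.mem_singleton] at *
    constructor
    · rintro ⟨h1, h2⟩
      exact ⟨h2, fun he => htA hA (he ▸ h1)⟩
    · rintro ⟨h1, h2⟩
      refine ⟨?_, h1⟩
      by_contra hna
      exact h2 (h.mp ⟨h1, hna⟩)
  rw [hset, Finset.card_sdiff_of_subset (by simp [htL hA]), card_Lset hq, Finset.card_singleton]

lemma tOf_eq (hq : l < q) (hA : Lset q l \ A = {t}) : tOf q l hq A = t := by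
  have hne : (Lset q l \ A).Nonempty := by rw [hA]; exact Finset.singleton_nonempty t
  have h1 : tOf q l hq A ∈ Lset q l \ A := by
    rw [tOf, dif_pos hne]; exact Finset.min'_mem _ _
  rw [hA, Finset.mem_singleton] at h1; exact h1

lemma Lset_eq_insert (hA : Lset q l \ A = {t}) :
    Lset q l = insert t (A ∩ Lset q l) := by
  ext x
  have h := mem_L_iff hA x
  simp only [Finset.mem_insert, Finset.mem_inter]
  constructor
  · intro hx
    by_cases hxA : x ∈ A
    · exact Or.inr ⟨hxA, hx⟩
    · exact Or.inl (h.mp ⟨hx, hxA⟩)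
  · rintro (rfl|⟨_, h2⟩)
    · exact htL hA
    · exact h2

lemma fsign_p (hq : l < q) (hA : Lset q l \ A = {t}) :
    fsign {pivElt q l hq} (A \ {pivElt q l hq}) = (-1 : ℤ) ^ (l - 1) := by
  rw [fsign_eq (by simp : pivElt q l hq ∉ A \ {pivElt q l hq})]
  congr 1
  have hset : (A \ {pivElt q l hq}).filter (· < pivElt q l hq) = A ∩ Lset q l := by
    ext x
    simp only [Finset.mem_filter, Finset.mem_sdiff, Finset.mem_singleton,
      Finset.mem_inter, mem_Lset]
    have hplt : x < pivElt q l hq ↔ (x : ℕ) < l := by rw [Fin.lt_def]; rfl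
    rw [hplt]
    constructor
    · rintro ⟨⟨h1, _⟩, h3⟩; exact ⟨h1, h3⟩
    · rintro ⟨h1, h2⟩
      refine ⟨⟨h1, fun he => ?_⟩, h2⟩
      rw [he] at h2; exact absurd h2 (by simp [pivElt])
  rw [hset, card_AL hq hA]

lemma gap_ineq (hq : l < q) (hA : Lset q l \ A = {t}) (hpiv : pivElt q l hq ∈ A)
    (D : Fin q → (Fin n →₀ ℕ))
    (hgap : lcmMono k n q D {pivElt q l hq} ∣ lcmMono k n q D (Lset q l))
    {i : Fin q} (hi : i ∈ Lset q l) :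
    ((insert t A) \ {i}).sup D ≤ D t + (A \ {pivElt q l hq}).sup D := by
  have hDp : D (pivElt q l hq) ≤ (Lset q l).sup D := by
    simpa [lcmMono, Finset.sup_singleton] using hgap
  have hLsub : Lset q l ⊆ insert t (A \ {pivElt q l hq}) := by
    intro x hx
    rcases eq_or_ne x t with rfl|hxt
    · exact Finset.mem_insert_self _ _
    · refine Finset.mem_insert_of_mem (Finset.mem_sdiff.mpr ⟨?_, ?_⟩)
      · by_contra hna
        exact hxt ((mem_L_iff hA x).mp ⟨hx, hna⟩)
      · simp only [Finset.mem_singleton]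
        intro he
        exact pivElt_not_Lset hq (he ▸ hx)
  refine Finset.sup_le fun x hx => ?_
  rcases Finset.mem_sdiff.mp hx with ⟨hx1, _⟩
  rcases Finset.mem_insert.mp hx1 with rfl|hxA
  · exact le_self_add
  · rcases eq_or_ne x (pivElt q l hq) with rfl|hxp
    · exact le_trans (le_trans hDp (Finset.sup_mono hLsub)) (sup_insert_le D t _)
    · exact le_trans (Finset.le_sup (Finset.mem_sdiff.mpr ⟨hxA, by simp [hxp]⟩)) le_add_self

end WithA
lemma dsig_inner (D : Fin q → (Fin n →₀ ℕ)) (c : Fin q → MvPolynomial (Fin n) k)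
    (A : Finset (Fin q)) (j : Fin q) (hj : j ∉ A) :
    (∑ i ∈ insert j A, Finsupp.single ((insert j A) \ {i})
      (((fsign {j} A : MvPolynomial (Fin n) k) * c j *
          monomial (D j + A.sup D - (insert j A).sup D) (1:k)) *
        ((fsign {i} ((insert j A) \ {i}) : MvPolynomial (Fin n) k) *
          monomial ((insert j A).sup D - ((insert j A) \ {i}).sup D) (1:k))))
    = Et D c A j +
        ∑ i ∈ A, Qt D c A (fsign {j} A * fsign {i} ((insert j A) \ {i})) j i := by
  rw [Finset.sum_insert hj]
  congr 1
  · have hidx : (insert j A) \ {j} = A := by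
      rw [← Finset.erase_eq, Finset.erase_insert hj]
    rw [hidx, Et, coeff_comb, fsign_sq hj,
      tsub_comp1 D j A A (Finset.subset_insert _ _), add_tsub_cancel_right]
    push_cast
    ring
  · refine Finset.sum_congr rfl fun i hi => ?_
    rw [Qt, coeff_comb, tsub_comp1 D j A _ Finset.sdiff_subset]

section WithA2
variable {A : Finset (Fin q)} {t : Fin q}

lemma corr_eval (hq : l < q) (hA : Lset q l \ A = {t}) (hpiv : pivElt q l hq ∈ A)
    (D : Fin q → (Fin n →₀ ℕ)) (c : Fin q → MvPolynomial (Fin n) k)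
    (hgap : lcmMono k n q D {pivElt q l hq} ∣ lcmMono k n q D (Lset q l)) :
    ((fsign {pivElt q l hq} (A \ {pivElt q l hq}) : MvPolynomial (Fin n) k) *
        monomial (A.sup D - (A \ {pivElt q l hq}).sup D) (1:k)) •
      sigCorr k n q l hq D c (A \ {pivElt q l hq}) t
    = Et D c A t +
        ∑ i ∈ A ∩ Lset q l,
          Qt D c A (fsign {t} A * fsign {i} ((insert t A) \ {i})) t i := by
  have htA' : t ∉ A := htA hA
  have htp : t < pivElt q l hq := by
    have := htL hA
    rw [mem_Lset] at this
    rw [Fin.lt_def]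
    exact this
  have hidx : insert (pivElt q l hq) (insert t (A \ {pivElt q l hq})) = insert t A := by
    ext x
    by_cases hx : x = pivElt q l hq <;> simp [hx, hpiv] <;> tauto
  have hmain : ((fsign {pivElt q l hq} (A \ {pivElt q l hq}) :
        MvPolynomial (Fin n) k) *
        monomial (A.sup D - (A \ {pivElt q l hq}).sup D) (1:k)) •
      sigCorr k n q l hq D c (A \ {pivElt q l hq}) t
      = ∑ i ∈ Lset q l,
          Qt D c A (fsign {t} A * fsign {i} ((insert t A) \ {i})) t i := by
    rw [sigCorr, Finset.smul_sum]
    refine Finset.sum_congr rfl fun i hi => ?_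
    rw [hidx, Finsupp.smul_single, smul_eq_mul, Qt]
    congr 1
    have hip : i < pivElt q l hq := by
      rw [Fin.lt_def]; exact mem_Lset.mp hi
    have hs1 : fsign {t} (A \ {pivElt q l hq}) = fsign {t} A :=
      fsign_sdiff_larger htA' htp
    have hsetenum : insert t (A \ {pivElt q l hq}) \ {i}
        = ((insert t A) \ {i}) \ {pivElt q l hq} := by
      have htp' : t ≠ pivElt q l hq := ne_of_lt htp
      ext x
      by_cases hx : x = t <;> simp [hx, htp'] <;> tauto
    have hs2 : fsign {i} (insert t (A \ {pivElt q l hq}) \ {i})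
        = fsign {i} ((insert t A) \ {i}) := by
      rw [hsetenum]; exact fsign_sdiff_larger (by simp) hip
    have hm : (A.sup D - (A \ {pivElt q l hq}).sup D) +
        (D t + (A \ {pivElt q l hq}).sup D - ((insert t A) \ {i}).sup D)
        = D t + A.sup D - ((insert t A) \ {i}).sup D :=
      tsub_aux _ _ _ _ (Finset.sup_mono Finset.sdiff_subset)
        (gap_ineq hq hA hpiv D hgap hi)
    have hl1 : 0 < l := lt_of_le_of_lt (Nat.zero_le (t : ℕ)) (mem_Lset.mp (htL hA))
    have hpow : ((-1 : MvPolynomial (Fin n) k)) ^ (l-1) * (-1) ^ (l+1) = 1 := by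
      rw [← pow_add, show l-1+(l+1) = 2*l by omega, pow_mul]
      norm_num
    rw [fsign_p hq hA, hs1, hs2, ← hm, ← mono_mul]
    push_cast
    linear_combination ((fsign {t} A : MvPolynomial (Fin n) k) * c t *
      (fsign {i} ((insert t A) \ {i}) : MvPolynomial (Fin n) k) *
      monomial (A.sup D - (A \ {pivElt q l hq}).sup D) (1:k) *
      monomial (D t + (A \ {pivElt q l hq}).sup D - ((insert t A) \ {i}).sup D) (1:k)) * hpow
  rw [hmain]
  conv_lhs => rw [Lset_eq_insert hA]
  rw [Finset.sum_insert (by simp [htA'])]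
  congr 1
  rw [Qt]
  have hidx2 : (insert t A) \ {t} = A := by
    rw [← Finset.erase_eq, Finset.erase_insert htA']
  rw [hidx2, fsign_sq htA', add_tsub_cancel_right, Et]
  push_cast
  ring

set_option maxHeartbeats 2000000 in
lemma per_i (hq : l < q) (hl : 2 ≤ l) (hA : Lset q l \ A = {t})
    (hpiv : pivElt q l hq ∈ A)
    (D : Fin q → (Fin n →₀ ℕ)) (c : Fin q → MvPolynomial (Fin n) k)
    (hgap : lcmMono k n q D {pivElt q l hq} ∣ lcmMono k n q D (Lset q l))
    (i : Fin q) (hi : i ∈ A) :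
    sigmaMap k n q l hq D c (Finsupp.single (A \ {i})
        ((fsign {i} (A \ {i}) : MvPolynomial (Fin n) k) *
          monomial (A.sup D - (A \ {i}).sup D) (1:k)))
    = Et D c A i
      + (∑ j ∈ Aᶜ \ {t}, Qt D c A (fsign {i} (A \ {i}) * fsign {j} (A \ {i})) j i)
      + (if i ∈ Lset q l then
          Qt D c A (fsign {i} (A \ {i}) * fsign {t} (A \ {i})) t i else 0)
      + (if i = pivElt q l hq then
          (Et D c A t + ∑ i' ∈ A ∩ Lset q l,
            Qt D c A (fsign {t} A * fsign {i'} ((insert t A) \ {i'})) t i') else 0) := by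
  have htA' : t ∉ A := htA hA
  have hit : i ≠ t := fun h => htA' (h ▸ hi)
  have hpL : pivElt q l hq ∉ Lset q l := pivElt_not_Lset hq
  rw [sigmaMap, Finsupp.linearCombination_single]
  by_cases hiL : i ∈ Lset q l
  · -- case 1 : i ∈ [l]
    have hip : i ≠ pivElt q l hq := fun h => hpL (h ▸ hiL)
    have hc2 : ((A \ {i}) ∩ Lset q l).card = l - 2 := by
      have hseteq : (A \ {i}) ∩ Lset q l = (A ∩ Lset q l) \ {i} := by
        ext x
        simp only [Finset.mem_inter, Finset.mem_sdiff, Finset.mem_singleton]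
        tauto
      rw [hseteq, Finset.card_sdiff_of_subset (by simp [hi, hiL]), card_AL hq hA,
        Finset.card_singleton]
      omega
    rw [if_pos (by rw [hc2]; omega), smul_sigTerm]
    have hr1 : (A \ {i})ᶜ = insert i Aᶜ := by
      ext x
      simp only [Finset.mem_compl, Finset.mem_sdiff, Finset.mem_singleton,
        Finset.mem_insert]
      tauto
    rw [hr1]
    rw [Finset.sum_insert (by simp [hi])]
    rw [sig_diag_eq D c A i hi]
    rw [Finset.sum_eq_sum_sdiff_singleton_add (by simp [htA'] : t ∈ Aᶜ)]
    rw [sig_term_eq D c A i t hi (Ne.symm hit)]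
    rw [if_pos hiL, if_neg hip, add_zero, ← add_assoc]
    rw [add_left_inj, add_right_inj]
    refine Finset.sum_congr rfl fun j hj => ?_
    have hjA : j ∉ A := by
      rcases Finset.mem_sdiff.mp hj with ⟨hj1, _⟩
      exact Finset.mem_compl.mp hj1
    exact sig_term_eq D c A i j hi (fun h => hjA (h ▸ hi))
  · -- i ∉ [l]
    have hceq : ((A \ {i}) ∩ Lset q l) = A ∩ Lset q l := by
      ext x
      simp only [Finset.mem_inter, Finset.mem_sdiff, Finset.mem_singleton]
      constructor
      · rintro ⟨⟨h1, _⟩, h2⟩; exact ⟨h1, h2⟩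
      · rintro ⟨h1, h2⟩
        exact ⟨⟨h1, fun he => hiL (he ▸ h2)⟩, h2⟩
    have hAi : Lset q l \ (A \ {i}) = {t} := by
      rw [← hA]
      ext x
      simp only [Finset.mem_sdiff, Finset.mem_singleton]
      constructor
      · rintro ⟨h1, h2⟩
        refine ⟨h1, fun hxA => h2 ⟨hxA, fun he => hiL (he ▸ h1)⟩⟩
      · rintro ⟨h1, h2⟩
        exact ⟨h1, fun hx => h2 hx.1⟩
    rw [if_neg (by rw [hceq, card_AL hq hA]; simp), tOf_eq hq hAi]
    have hr2 : (insert t (A \ {i}))ᶜ = insert i (Aᶜ \ {t}) := by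
      ext x
      simp only [Finset.mem_compl, Finset.mem_insert, Finset.mem_sdiff,
        Finset.mem_singleton]
      by_cases hx : x = i
      · simp [hx, hi, Ne.symm hit]
        exact fun h => absurd (h ▸ hi) htA'
      · simp [hx]
        tauto
    by_cases hip : i = pivElt q l hq
    · -- i = pivot
      subst hip
      rw [if_neg (by simp), smul_add, smul_sigTerm, hr2]
      rw [Finset.sum_insert (by simp [hi])]
      rw [sig_diag_eq D c A _ hi]
      rw [corr_eval hq hA hpiv D c hgap, if_neg hiL, if_pos rfl, add_zero]
      have hsum : ∀ j ∈ Aᶜ \ {t},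
          Finsupp.single (insert j (A \ {pivElt q l hq}))
            (((fsign {pivElt q l hq} (A \ {pivElt q l hq}) :
                MvPolynomial (Fin n) k) *
                monomial (A.sup D - (A \ {pivElt q l hq}).sup D) (1:k)) *
              ((fsign {j} (A \ {pivElt q l hq}) : MvPolynomial (Fin n) k) * c j *
                monomial (D j + (A \ {pivElt q l hq}).sup D -
                  (insert j (A \ {pivElt q l hq})).sup D) (1:k)))
          = Qt D c A (fsign {pivElt q l hq} (A \ {pivElt q l hq}) *
              fsign {j} (A \ {pivElt q l hq})) j (pivElt q l hq) := by
        intro j hj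
        have hjA : j ∉ A := Finset.mem_compl.mp (Finset.mem_sdiff.mp hj).1
        exact sig_term_eq D c A _ j hi (fun h => hjA (h ▸ hi))
      rw [Finset.sum_congr rfl hsum]
    · -- i ≠ pivot, i ∉ [l]
      rw [if_pos (Finset.mem_sdiff.mpr ⟨hpiv, by simp [Ne.symm hip]⟩),
        smul_sigTerm, hr2]
      rw [Finset.sum_insert (by simp [hi])]
      rw [sig_diag_eq D c A i hi]
      rw [if_neg hiL, if_neg hip, add_zero, add_zero]
      congr 1
      refine Finset.sum_congr rfl fun j hj => ?_
      have hjA : j ∉ A := Finset.mem_compl.mp (Finset.mem_sdiff.mp hj).1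
      exact sig_term_eq D c A i j hi (fun h => hjA (h ▸ hi))

set_option maxHeartbeats 2000000 in
lemma HT1 (hq : l < q) (hA : Lset q l \ A = {t}) (hpiv : pivElt q l hq ∈ A)
    (D : Fin q → (Fin n →₀ ℕ)) (c : Fin q → MvPolynomial (Fin n) k) :
    taylorD k n q D (sigmaMap k n q l hq D c (Finsupp.single A 1)) =
      (∑ j ∈ Aᶜ \ {t}, Et D c A j) +
        ∑ j ∈ Aᶜ \ {t}, ∑ i ∈ A,
          Qt D c A (fsign {j} A * fsign {i} ((insert j A) \ {i})) j i := by
  have htA' : t ∉ A := htA hA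
  rw [sigmaMap, Finsupp.linearCombination_single, one_smul,
    if_neg (by rw [card_AL hq hA]; simp), if_pos hpiv, tOf_eq hq hA]
  have hr : (insert t A)ᶜ = Aᶜ \ {t} := by
    ext x
    simp only [Finset.mem_compl, Finset.mem_insert, Finset.mem_sdiff,
      Finset.mem_singleton, not_or]
    tauto
  rw [sigTerm, hr, map_sum, ← Finset.sum_add_distrib]
  refine Finset.sum_congr rfl fun j hj => ?_
  have hjA : j ∉ A := Finset.mem_compl.mp (Finset.mem_sdiff.mp hj).1
  rw [taylorD_single]
  exact dsig_inner D c A j hjA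

end WithA2
end MainLemmas

lemma key_arr {M : Type*} [AddCommGroup M] (e1 e2 e3 x1 x2 y1 y2 R : M)
    (hx : x1 + x2 = 0) (hy : y2 + y1 = 0) (he : e1 + e2 + e3 = R) :
    (e1 + x1) + (((e2 + x2) + y2) + (e3 + y1)) = R := by
  rw [← he, show (e1 + x1) + (((e2 + x2) + y2) + (e3 + y1))
    = (e1 + e2 + e3) + ((x1 + x2) + (y2 + y1)) from by abel, hx, hy]
  simp

set_option maxHeartbeats 4000000 in
/-- **Lemma 5.3 of the paper.**
For any `s ∈ [r]` and any `A ⊆ [q]` with `[l] ∖ A = {t}` a singleton and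
`l+1 ∈ A`, one has `(∂σ_{e_s} + σ_{e_s}∂)(ε_A) = a_s ε_A` in the pivot
resolution `T_{1,…,l}`. -/
theorem homotopy_on_basis_with_pivot {k : Type*} [Field k] {n q l : ℕ}
    (hl : 2 ≤ l) (hq : l < q)
    (D : Fin q → (Fin n →₀ ℕ))
    (hne : ∀ i : Fin q, D i ≠ 0)
    (hmin : ∀ i j : Fin q, i ≠ j → ¬ lcmMono k n q D {i} ∣ lcmMono k n q D {j})
    (hgap : lcmMono k n q D {pivElt q l hq} ∣ lcmMono k n q D (Lset q l))
    (r : ℕ) (a : Fin r → Fin q → MvPolynomial (Fin n) k)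
    (s : Fin r) (A : Finset (Fin q)) (t : Fin q)
    (hA : Lset q l \ A = {t}) (hpiv : pivElt q l hq ∈ A) :
    taylorD k n q D (sigmaMap k n q l hq D (a s) (Finsupp.single A 1)) +
      sigmaMap k n q l hq D (a s) (taylorD k n q D (Finsupp.single A 1)) =
    aElt k n q D (a s) • Finsupp.single A 1 := by
  have htA' : t ∉ A := htA hA
  set c : Fin q → MvPolynomial (Fin n) k := a s with hc
  have hE : (∑ j ∈ Aᶜ \ {t}, Et D c A j) + (∑ i ∈ A, Et D c A i) + Et D c A t
      = aElt k n q D c • Finsupp.single A (1 : MvPolynomial (Fin n) k) := by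
    simp only [Et]
    rw [Finsupp.smul_single, smul_eq_mul, mul_one, aElt,
      Finsupp.single_finset_sum, ← Finset.sum_compl_add_sum A,
      Finset.sum_eq_sum_sdiff_singleton_add (show t ∈ Aᶜ by simp [htA'])]
    abel
  have hX : (∑ j ∈ Aᶜ \ {t}, ∑ i ∈ A,
        Qt D c A (fsign {j} A * fsign {i} ((insert j A) \ {i})) j i) +
      (∑ i ∈ A, ∑ j ∈ Aᶜ \ {t},
        Qt D c A (fsign {i} (A \ {i}) * fsign {j} (A \ {i})) j i) = 0 := by
    rw [Finset.sum_comm (s := A), ← Finset.sum_add_distrib]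
    refine Finset.sum_eq_zero fun j hj => ?_
    rw [← Finset.sum_add_distrib]
    refine Finset.sum_eq_zero fun i hi => ?_
    have hjA : j ∉ A := Finset.mem_compl.mp (Finset.mem_sdiff.mp hj).1
    exact Q_cancel D c A i j hi hjA (fun h => hjA (h ▸ hi))
  have hY : (∑ i ∈ A ∩ Lset q l,
        Qt D c A (fsign {i} (A \ {i}) * fsign {t} (A \ {i})) t i) +
      (∑ i' ∈ A ∩ Lset q l,
        Qt D c A (fsign {t} A * fsign {i'} ((insert t A) \ {i'})) t i') = 0 := by
    rw [← Finset.sum_add_distrib]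
    refine Finset.sum_eq_zero fun i hi => ?_
    have hiA : i ∈ A := (Finset.mem_inter.mp hi).1
    rw [add_comm]
    exact Q_cancel D c A i t hiA htA' (fun h => htA' (h ▸ hiA))
  rw [taylorD_single D A 1]
  simp only [one_mul]
  rw [map_sum]
  rw [Finset.sum_congr rfl fun i hi => per_i hq hl hA hpiv D c hgap i hi]
  rw [HT1 hq hA hpiv D c]
  rw [Finset.sum_add_distrib, Finset.sum_add_distrib, Finset.sum_add_distrib,
    Finset.sum_ite_mem, Finset.sum_ite_eq' A (pivElt q l hq), if_pos hpiv]
  exact key_arr _ _ _ _ _ _ _ _ hX hY hE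
end
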